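/- arXiv:1304.7442 — 8 statements merged into one kernel-verified Lean document; each statement's English description precedes it below -/
import Mathlib

section
/- Let n be a positive integer and let a, b : Fin n → ℝ be non-increasing sequences of nonnegative reals such that a is majorized by b, i.e. ∑_{i<k} aᵢ ≤ ∑_{i<k} bᵢ for every k ≤ n and ∑_{i<n} aᵢ = ∑_{i<n} bᵢ. Then H(a) ≥ H(b), where H(p) = ∑ᵢ φ(pᵢ) is the Shannon entropy. -/
open Finset Real

/-- Tangent-line inequality for `φ(x) = -x log x`. -/
lemma phi_tangent {x y : ℝ} (hx : 0 ≤ x) (hy : 0 ≤ y) (h0 : x = 0 → y = 0) :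
    -(y * Real.log y) ≤ -(x * Real.log x) + (-(Real.log x + 1)) * (y - x) := by
  rcases eq_or_lt_of_le hx with hx0 | hxpos
  · have hy0 : y = 0 := h0 hx0.symm
    simp [← hx0, hy0]
  rcases eq_or_lt_of_le hy with hy0 | hypos
  · rw [← hy0]
    simp only [Real.log_zero, mul_zero, neg_zero, zero_sub, zero_add]
    nlinarith [hxpos.le]
  · have h := Real.log_le_sub_one_of_pos (x := x / y) (div_pos hxpos hypos)
    rw [Real.log_div (ne_of_gt hxpos) (ne_of_gt hypos)] at h
    have h2 : y * (Real.log x - Real.log y) ≤ x - y := by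
      have := mul_le_mul_of_nonneg_left h (le_of_lt hypos)
      calc y * (Real.log x - Real.log y) ≤ y * (x / y - 1) := this
        _ = x - y := by field_simp
    nlinarith

/-- If `a`, `b` are non-increasing nonnegative finite sequences and
`a` is majorized by `b`, then the Shannon entropy of `a` is at least that of `b`.
Here `φ(x) = -x·log x` and `H(p) = ∑ᵢ φ(pᵢ)`. -/
theorem shannon_entropy_antitone_of_majorized (n : ℕ) (hn : 0 < n)
    (a b : Fin n → ℝ) (ha : Antitone a) (hb : Antitone b)
    (ha0 : ∀ i, 0 ≤ a i) (hb0 : ∀ i, 0 ≤ b i)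
    (hmaj : ∀ k : ℕ, k ≤ n →
      ∑ i ∈ Finset.univ.filter (fun i : Fin n => (i : ℕ) < k), a i ≤
        ∑ i ∈ Finset.univ.filter (fun i : Fin n => (i : ℕ) < k), b i)
    (hsum : ∑ i, a i = ∑ i, b i) :
    ∑ i, (-(b i * Real.log (b i))) ≤ ∑ i, (-(a i * Real.log (a i))) := by
  classical
  set A : ℕ → ℝ := fun k => if h : k < n then a ⟨k, h⟩ else 0 with hA
  set B : ℕ → ℝ := fun k => if h : k < n then b ⟨k, h⟩ else 0 with hB
  have hA0 : ∀ k, 0 ≤ A k := by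
    intro k; simp only [hA]; split <;> simp [ha0]
  have hB0 : ∀ k, 0 ≤ B k := by
    intro k; simp only [hB]; split <;> simp [hb0]
  have hAanti : ∀ j k, j ≤ k → A k ≤ A j := by
    intro j k hjk
    by_cases hk : k < n
    · have hj : j < n := lt_of_le_of_lt hjk hk
      simp only [hA, dif_pos hk, dif_pos hj]
      exact ha (show (⟨j, hj⟩ : Fin n) ≤ ⟨k, hk⟩ from hjk)
    · simp only [hA, dif_neg hk]
      exact hA0 j
  -- conversion of filtered Fin sums to range sums
  have hconv : ∀ (f : Fin n → ℝ) (k : ℕ), k ≤ n →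
      ∑ i ∈ Finset.univ.filter (fun i : Fin n => (i : ℕ) < k), f i =
        ∑ i ∈ Finset.range k, (fun m => if h : m < n then f ⟨m, h⟩ else 0) i := by
    intro f k hk
    refine Finset.sum_nbij' (fun i => (i : ℕ)) (fun m => ⟨m % n, Nat.mod_lt m hn⟩)
      ?_ ?_ ?_ ?_ ?_
    · intro i hi
      simp only [Finset.mem_filter] at hi
      exact Finset.mem_range.mpr hi.2
    · intro m hm
      have hm' : m < k := Finset.mem_range.mp hm
      simp [Nat.mod_eq_of_lt (lt_of_lt_of_le hm' hk), hm']
    · intro i hi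
      ext
      simp [Nat.mod_eq_of_lt i.isLt]
    · intro m hm
      have hm' : m < k := Finset.mem_range.mp hm
      simp [Nat.mod_eq_of_lt (lt_of_lt_of_le hm' hk)]
    · intro i hi
      simp [i.isLt]
  -- total sums
  have hAn : ∑ i ∈ Finset.range n, A i = ∑ i, a i := by
    have h := hconv a n le_rfl
    rw [Finset.filter_true_of_mem (fun i _ => i.isLt)] at h
    exact h.symm
  have hBn : ∑ i ∈ Finset.range n, B i = ∑ i, b i := by
    have h := hconv b n le_rfl
    rw [Finset.filter_true_of_mem (fun i _ => i.isLt)] at h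
    exact h.symm
  -- partial-sum differences
  set D : ℕ → ℝ := fun k => ∑ i ∈ Finset.range k, (B i - A i) with hD
  have hD0 : ∀ k, k ≤ n → 0 ≤ D k := by
    intro k hk
    have := hmaj k hk
    rw [hconv a k hk, hconv b k hk] at this
    simp only [hD, Finset.sum_sub_distrib]
    exact sub_nonneg.mpr this
  have hDn : D n = 0 := by
    simp only [hD, Finset.sum_sub_distrib, hAn, hBn, hsum, sub_self]
  have hDzero : ∀ k, k ≤ n → A k = 0 → D k = 0 := by
    intro k hk hAk
    have hsplit : D k + ∑ i ∈ Finset.Ico k n, (B i - A i) = D n := by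
      simp only [hD, Finset.range_eq_Ico]
      exact Finset.sum_Ico_consecutive _ (Nat.zero_le k) hk
    have hAico : ∀ i ∈ Finset.Ico k n, B i - A i = B i := by
      intro i hi
      have hki : k ≤ i := (Finset.mem_Ico.mp hi).1
      have : A i = 0 := le_antisymm (hAk ▸ hAanti k i hki) (hA0 i)
      rw [this, sub_zero]
    have hBico : 0 ≤ ∑ i ∈ Finset.Ico k n, (B i - A i) := by
      rw [Finset.sum_congr rfl hAico]
      exact Finset.sum_nonneg fun i _ => hB0 i
    have := hD0 k hk
    rw [hDn] at hsplit
    linarith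
  -- A k = 0 implies B k = 0
  have hABzero : ∀ k, A k = 0 → B k = 0 := by
    intro k hAk
    by_cases hkn : k < n
    · have hk1 : k + 1 ≤ n := hkn
      have hA1 : A (k + 1) = 0 :=
        le_antisymm (hAk ▸ hAanti k (k + 1) (Nat.le_succ k)) (hA0 (k + 1))
      have h1 : D (k + 1) = 0 := by
        rcases eq_or_lt_of_le hk1 with h | h
        · rw [h]; exact hDn
        · exact hDzero (k + 1) hk1 hA1
      have h2 : D k = 0 := hDzero k (le_of_lt hkn) hAk
      have h3 : D (k + 1) = D k + (B k - A k) := by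
        simp only [hD, Finset.sum_range_succ]
      rw [h1, h2, hAk] at h3
      linarith
    · simp only [hB, dif_neg hkn]
  -- the slopes
  set g : ℕ → ℝ := fun k => -(Real.log (A k) + 1) with hg
  -- pointwise tangent bound and summation
  have hsum1 : ∑ i ∈ Finset.range n, (-(B i * Real.log (B i))) ≤
      ∑ i ∈ Finset.range n, ((-(A i * Real.log (A i))) + g i * (B i - A i)) :=
    Finset.sum_le_sum fun i _ => phi_tangent (hA0 i) (hB0 i) (hABzero i)
  -- Abel summation: the correction term is nonpositive
  have habel := Finset.sum_range_by_parts g (fun i => B i - A i) n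
  simp only [smul_eq_mul] at habel
  have hS : ∑ i ∈ Finset.range n, g i * (B i - A i) ≤ 0 := by
    rw [habel]
    have h1 : ∑ i ∈ Finset.range n, (B i - A i) = 0 := hDn
    rw [h1, mul_zero, zero_sub, neg_nonpos]
    refine Finset.sum_nonneg fun i hi => ?_
    have hi' : i < n - 1 := Finset.mem_range.mp hi
    have hi1 : i + 1 ≤ n := le_trans (Nat.succ_le_of_lt hi') (Nat.sub_le n 1)
    have hDpos : 0 ≤ D (i + 1) := hD0 (i + 1) hi1
    by_cases hA1 : A (i + 1) = 0
    · have : D (i + 1) = 0 := hDzero (i + 1) hi1 hA1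
      simp only [hD] at this
      rw [this, mul_zero]
    · have hA1pos : 0 < A (i + 1) := lt_of_le_of_ne (hA0 (i + 1)) (Ne.symm hA1)
      have hAle : A (i + 1) ≤ A i := hAanti i (i + 1) (Nat.le_succ i)
      have hlog : Real.log (A (i + 1)) ≤ Real.log (A i) :=
        Real.log_le_log hA1pos hAle
      have hginc : 0 ≤ g (i + 1) - g i := by simp only [hg]; linarith
      exact mul_nonneg hginc hDpos
  -- put everything together
  have hfinal : ∑ i ∈ Finset.range n, (-(B i * Real.log (B i))) ≤
      ∑ i ∈ Finset.range n, (-(A i * Real.log (A i))) := by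
    rw [Finset.sum_add_distrib] at hsum1
    linarith
  have hconvA : ∑ i ∈ Finset.range n, (-(A i * Real.log (A i))) =
      ∑ i, (-(a i * Real.log (a i))) := by
    have h := hconv (fun i => -(a i * Real.log (a i))) n le_rfl
    rw [Finset.filter_true_of_mem (fun i _ => i.isLt)] at h
    rw [h]
    refine Finset.sum_congr rfl fun i hi => ?_
    have hin : i < n := Finset.mem_range.mp hi
    simp only [hA, dif_pos hin]
  have hconvB : ∑ i ∈ Finset.range n, (-(B i * Real.log (B i))) =
      ∑ i, (-(b i * Real.log (b i))) := by
    have h := hconv (fun i => -(b i * Real.log (b i))) n le_rfl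
    rw [Finset.filter_true_of_mem (fun i _ => i.isLt)] at h
    rw [h]
    refine Finset.sum_congr rfl fun i hi => ?_
    have hin : i < n := Finset.mem_range.mp hi
    simp only [hB, dif_pos hin]
  rw [← hconvA, ← hconvB]
  exact hfinal
end

section
/- Let n be a positive integer and let a, b : Fin n → ℝ be non-increasing sequences of nonnegative reals such that a is majorized by b, i.e. ∑_{i<k} aᵢ ≤ ∑_{i<k} bᵢ for every k ≤ n and ∑_{i<n} aᵢ = ∑_{i<n} bᵢ. If moreover H(a) = H(b), where H(p) = ∑ᵢ φ(pᵢ) is the Shannon entropy, then a = b. -/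
/-!
The tangent line of the concave function `φ = negMulLog` at `x > 0` lies above its graph,
with a gap `x * klFun (y / x)` at `y` that vanishes only at `y = x`. Summing the tangent
inequalities at the positive entries `aᵢ` gives
`H(b) + ∑ aᵢ klFun (bᵢ / aᵢ) = H(a) - ∑ φ'(aᵢ) (aᵢ - bᵢ)`. The slopes `φ'(aᵢ) = -log aᵢ - 1`
increase with `i` because `a` decreases, and the partial sums of `a - b` are nonpositive and
vanish at the end, so Abel summation makes the last sum nonnegative. Hence equal entropies
force every gap to vanish. Entries where `a` vanishes form a tail, on which `b` vanishes too
by majorization.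
-/

open Finset Real InformationTheory

lemma negMulLog_add_mul_klFun_div {x : ℝ} (hx : x ≠ 0) (y : ℝ) :
    negMulLog y + x * klFun (y / x) = negMulLog x + (-log x - 1) * (y - x) := by
  rcases eq_or_ne y 0 with rfl | hy
  · simp only [klFun, negMulLog]
    ring
  · simp only [klFun, negMulLog, log_div hy hx]
    field_simp
    ring

lemma sum_range_mul_nonneg_of_monotoneOn {R : Type*} [Ring R] [PartialOrder R]
    [IsOrderedRing R] {c d : ℕ → R} {m : ℕ} (hc : MonotoneOn c (Set.Iio m))
    (hd : ∀ k ≤ m, ∑ i ∈ range k, d i ≤ 0) (hdm : ∑ i ∈ range m, d i = 0) :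
    0 ≤ ∑ i ∈ range m, c i * d i := by
  have hparts := sum_range_by_parts c d m
  simp only [smul_eq_mul] at hparts
  rw [hparts, hdm, mul_zero, zero_sub, neg_nonneg]
  refine sum_nonpos fun i hi => ?_
  have hi : i < m - 1 := mem_range.1 hi
  exact mul_nonpos_of_nonneg_of_nonpos
    (sub_nonneg.2 (hc (Set.mem_Iio.2 (by omega)) (Set.mem_Iio.2 (by omega)) i.le_succ))
    (hd _ (by omega))

theorem sum_negMulLog_add_sum_mul_klFun_le {A B : ℕ → ℝ} {m : ℕ}
    (hA : AntitoneOn A (Set.Iio m)) (hA0 : ∀ i < m, 0 < A i)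
    (hmaj : ∀ k ≤ m, ∑ i ∈ range k, A i ≤ ∑ i ∈ range k, B i)
    (hsum : ∑ i ∈ range m, A i = ∑ i ∈ range m, B i) :
    ∑ i ∈ range m, negMulLog (B i) + ∑ i ∈ range m, A i * klFun (B i / A i) ≤
      ∑ i ∈ range m, negMulLog (A i) := by
  have habel : 0 ≤ ∑ i ∈ range m, (-log (A i) - 1) * (A i - B i) := by
    refine sum_range_mul_nonneg_of_monotoneOn (fun i hi j hj hij => ?_)
      (fun k hk => by simpa only [sum_sub_distrib, sub_nonpos] using hmaj k hk)
      (by rw [sum_sub_distrib, hsum, sub_self])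
    linarith [log_le_log (hA0 j hj) (hA hi hj hij)]
  have htangent : ∀ i ∈ range m, negMulLog (B i) + A i * klFun (B i / A i) =
      negMulLog (A i) - (-log (A i) - 1) * (A i - B i) := fun i hi => by
    rw [negMulLog_add_mul_klFun_div (hA0 i (mem_range.1 hi)).ne']
    ring
  rw [← sum_add_distrib, sum_congr rfl htangent, sum_sub_distrib]
  linarith

theorem eqOn_of_majorized_of_sum_negMulLog_eq_of_pos {A B : ℕ → ℝ} {m : ℕ}
    (hA : AntitoneOn A (Set.Iio m)) (hA0 : ∀ i < m, 0 < A i) (hB0 : ∀ i < m, 0 ≤ B i)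
    (hmaj : ∀ k ≤ m, ∑ i ∈ range k, A i ≤ ∑ i ∈ range k, B i)
    (hsum : ∑ i ∈ range m, A i = ∑ i ∈ range m, B i)
    (hent : ∑ i ∈ range m, negMulLog (A i) = ∑ i ∈ range m, negMulLog (B i)) :
    Set.EqOn A B (Set.Iio m) := by
  have hratio : ∀ i < m, 0 ≤ B i / A i := fun i hi => div_nonneg (hB0 i hi) (hA0 i hi).le
  have hgap : ∀ i ∈ range m, 0 ≤ A i * klFun (B i / A i) := fun i hi =>
    mul_nonneg (hA0 i (mem_range.1 hi)).le (klFun_nonneg (hratio i (mem_range.1 hi)))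
  have hgap_zero := (sum_eq_zero_iff_of_nonneg hgap).1 <| le_antisymm
    (by linarith [sum_negMulLog_add_sum_mul_klFun_le hA hA0 hmaj hsum]) (sum_nonneg hgap)
  intro i hi
  have hi_zero := hgap_zero i (mem_range.2 hi)
  rw [mul_eq_zero, klFun_eq_zero_iff (hratio i hi), div_eq_one_iff_eq (hA0 i hi).ne'] at hi_zero
  exact (hi_zero.resolve_left (hA0 i hi).ne').symm

lemma AntitoneOn.exists_pos_prefix_zero_suffix {α : Type*} [LinearOrder α] [Zero α]
    {A : ℕ → α} {n : ℕ}
    (hA : AntitoneOn A (Set.Iio n)) (hA0 : ∀ i < n, 0 ≤ A i) :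
    ∃ m ≤ n, (∀ i < m, 0 < A i) ∧ ∀ i, m ≤ i → i < n → A i = 0 := by
  classical
  have hP : ∃ k, k = n ∨ A k ≤ 0 := ⟨n, Or.inl rfl⟩
  refine ⟨Nat.find hP, Nat.find_le (Or.inl rfl), fun i hi => ?_, fun i hmi hin => ?_⟩
  · exact not_le.1 (not_or.1 (Nat.find_min hP hi)).2
  · have hm : Nat.find hP < n := lt_of_le_of_lt hmi hin
    have hAm := (Nat.find_spec hP).resolve_left hm.ne
    exact le_antisymm ((hA hm hin hmi).trans hAm) (hA0 i hin)

theorem eqOn_of_majorized_of_sum_negMulLog_eq {A B : ℕ → ℝ} {n : ℕ}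
    (hA : AntitoneOn A (Set.Iio n)) (hA0 : ∀ i < n, 0 ≤ A i) (hB0 : ∀ i < n, 0 ≤ B i)
    (hmaj : ∀ k ≤ n, ∑ i ∈ range k, A i ≤ ∑ i ∈ range k, B i)
    (hsum : ∑ i ∈ range n, A i = ∑ i ∈ range n, B i)
    (hent : ∑ i ∈ range n, negMulLog (A i) = ∑ i ∈ range n, negMulLog (B i)) :
    Set.EqOn A B (Set.Iio n) := by
  obtain ⟨m, hmn, hApos, hAzero⟩ := hA.exists_pos_prefix_zero_suffix hA0
  have hBzero : ∀ i, m ≤ i → i < n → B i = 0 := by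
    have hB0' : ∀ i ∈ Ico m n, 0 ≤ B i := fun i hi => hB0 i (mem_Ico.1 hi).2
    have htail : ∑ i ∈ Ico m n, B i = 0 := le_antisymm
      (by linarith [hmaj m hmn, sum_range_add_sum_Ico A hmn, sum_range_add_sum_Ico B hmn,
        sum_eq_zero fun i hi => hAzero i (mem_Ico.1 hi).1 (mem_Ico.1 hi).2])
      (sum_nonneg hB0')
    exact fun i hmi hin => (sum_eq_zero_iff_of_nonneg hB0').1 htail i (mem_Ico.2 ⟨hmi, hin⟩)
  have hrestrict {f : ℕ → ℝ} (hf : ∀ i, m ≤ i → i < n → f i = 0) :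
      ∑ i ∈ range n, f i = ∑ i ∈ range m, f i :=
    (sum_subset (range_subset_range.2 hmn) fun i hin him =>
      hf i (not_lt.1 (mt mem_range.2 him)) (mem_range.1 hin)).symm
  have hnegMulLog {C : ℕ → ℝ} (hC : ∀ i, m ≤ i → i < n → C i = 0) :
      ∀ i, m ≤ i → i < n → negMulLog (C i) = 0 := fun i hmi hin => by
    rw [hC i hmi hin, negMulLog_zero]
  have hpos := eqOn_of_majorized_of_sum_negMulLog_eq_of_pos
    (hA.mono (Set.Iio_subset_Iio hmn)) hApos (fun i hi => hB0 i (hi.trans_le hmn))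
    (fun k hk => hmaj k (hk.trans hmn))
    (by rwa [← hrestrict hAzero, ← hrestrict hBzero])
    (by rwa [← hrestrict (hnegMulLog hAzero), ← hrestrict (hnegMulLog hBzero)])
  intro i hi
  rcases lt_or_ge i m with him | hmi
  · exact hpos him
  · rw [hAzero i hmi hi, hBzero i hmi hi]

lemma sum_filter_val_lt_eq_sum_range {M : Type*} [AddCommMonoid M] (f : ℕ → M) {n k : ℕ}
    (hk : k ≤ n) :
    ∑ i ∈ univ.filter (fun i : Fin n => (i : ℕ) < k), f i = ∑ i ∈ range k, f i :=
  sum_bij (fun i _ => i) (fun i hi => by simpa using hi) (fun _ _ _ _ h => Fin.ext h)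
    (fun j hj => ⟨⟨j, (mem_range.1 hj).trans_le hk⟩, by simpa using hj, rfl⟩) (fun _ _ => rfl)

theorem eq_of_majorized_of_shannon_entropy_eq_general (n : ℕ)
    (a b : Fin n → ℝ) (ha : Antitone a)
    (ha0 : ∀ i, 0 ≤ a i) (hb0 : ∀ i, 0 ≤ b i)
    (hmaj : ∀ k : ℕ, k ≤ n →
      ∑ i ∈ Finset.univ.filter (fun i : Fin n => (i : ℕ) < k), a i ≤
        ∑ i ∈ Finset.univ.filter (fun i : Fin n => (i : ℕ) < k), b i)
    (hsum : ∑ i, a i = ∑ i, b i)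
    (hent : ∑ i, (-(a i * Real.log (a i))) = ∑ i, (-(b i * Real.log (b i)))) :
    a = b := by
  obtain ⟨A, rfl⟩ : ∃ A : ℕ → ℝ, a = fun i : Fin n => A i :=
    ⟨Function.extend Fin.val a 0, funext fun i => (Fin.val_injective.extend_apply a 0 i).symm⟩
  obtain ⟨B, rfl⟩ : ∃ B : ℕ → ℝ, b = fun i : Fin n => B i :=
    ⟨Function.extend Fin.val b 0, funext fun i => (Fin.val_injective.extend_apply b 0 i).symm⟩
  have hmaj' (k : ℕ) (hk : k ≤ n) : ∑ i ∈ range k, A i ≤ ∑ i ∈ range k, B i := by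
    simpa only [sum_filter_val_lt_eq_sum_range _ hk] using hmaj k hk
  simp only [← neg_mul, ← negMulLog.eq_def,
    Fin.sum_univ_eq_sum_range (fun i => negMulLog (A i)),
    Fin.sum_univ_eq_sum_range (fun i => negMulLog (B i))] at hent
  rw [Fin.sum_univ_eq_sum_range A, Fin.sum_univ_eq_sum_range B] at hsum
  funext i
  exact eqOn_of_majorized_of_sum_negMulLog_eq (A := A)
    (fun i hi j hj hij => ha (show (⟨i, hi⟩ : Fin n) ≤ ⟨j, hj⟩ from hij))
    (fun i hi => ha0 ⟨i, hi⟩) (fun i hi => hb0 ⟨i, hi⟩) hmaj' hsum hent i.isLt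

/-- If `a`, `b` are non-increasing nonnegative finite sequences,
`a` is majorized by `b`, and their Shannon entropies coincide
(`H(p) = ∑ᵢ φ(pᵢ)` with `φ(x) = -x·log x`), then `a = b`. -/
theorem eq_of_majorized_of_shannon_entropy_eq (n : ℕ) (hn : 0 < n)
    (a b : Fin n → ℝ) (ha : Antitone a) (hb : Antitone b)
    (ha0 : ∀ i, 0 ≤ a i) (hb0 : ∀ i, 0 ≤ b i)
    (hmaj : ∀ k : ℕ, k ≤ n →
      ∑ i ∈ Finset.univ.filter (fun i : Fin n => (i : ℕ) < k), a i ≤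
        ∑ i ∈ Finset.univ.filter (fun i : Fin n => (i : ℕ) < k), b i)
    (hsum : ∑ i, a i = ∑ i, b i)
    (hent : ∑ i, (-(a i * Real.log (a i))) = ∑ i, (-(b i * Real.log (b i)))) :
    a = b :=
  eq_of_majorized_of_shannon_entropy_eq_general n a b ha ha0 hb0 hmaj hsum hent
end

section
/- Let a, b : ℕ → ℝ be non-increasing sequences with aᵢ > 0 and bᵢ > 0 for all i, each summable with total sum 1, such that a is majorized by b, i.e. ∑_{i<k} aᵢ ≤ ∑_{i<k} bᵢ for every k ∈ ℕ. Suppose further that the Shannon entropy series ∑ᵢ φ(aᵢ) and ∑ᵢ φ(bᵢ) are both summable (finite) and have equal sums, H(a) = H(b) < ∞. Then a = b. -/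
open Finset Filter Topology


/-- If `a`, `b : ℕ → ℝ` are non-increasing strictly positive
sequences of total sum 1 with `a` majorized by `b`, and their Shannon entropy
series (`φ(x) = -x·log x`) are both summable with equal sums, then `a = b`. -/
theorem eq_of_majorized_of_shannon_entropy_eq_infinite (a b : ℕ → ℝ)
    (ha : Antitone a) (hb : Antitone b)
    (ha0 : ∀ i, 0 < a i) (hb0 : ∀ i, 0 < b i)
    (hsa : Summable a) (hsb : Summable b)
    (hta : ∑' i, a i = 1) (htb : ∑' i, b i = 1)
    (hmaj : ∀ k : ℕ, ∑ i ∈ Finset.range k, a i ≤ ∑ i ∈ Finset.range k, b i)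
    (hHa : Summable (fun i => -(a i * Real.log (a i))))
    (hHb : Summable (fun i => -(b i * Real.log (b i))))
    (hent : ∑' i, (-(a i * Real.log (a i))) = ∑' i, (-(b i * Real.log (b i)))) :
    a = b := by
  have ha1 : ∀ i, a i ≤ 1 := fun i => hta ▸ Summable.le_tsum hsa i (fun j _ => (ha0 j).le)
  set c : ℕ → ℝ := fun i => -Real.log (a i) with hcdef
  have hc0 : ∀ i, 0 ≤ c i := fun i =>
    neg_nonneg.2 (Real.log_nonpos (ha0 i).le (ha1 i))
  have hcmono : Monotone c := fun i j hij =>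
    neg_le_neg (Real.log_le_log (ha0 j) (ha hij))
  set d : ℕ → ℝ := fun i => a i - b i with hddef
  set D : ℕ → ℝ := fun n => ∑ i ∈ Finset.range n, d i with hDdef
  have hDneg : ∀ n, D n ≤ 0 := fun n => by
    simp only [hDdef, hddef, Finset.sum_sub_distrib, sub_nonpos]
    exact hmaj n
  set e : ℕ → ℝ := fun i => b i * Real.log (b i / a i) + a i - b i with hedef
  have he0 : ∀ i, 0 ≤ e i := by
    intro i
    have h := Real.log_le_sub_one_of_pos (show (0:ℝ) < a i / b i from div_pos (ha0 i) (hb0 i))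
    have h2 : b i * Real.log (a i / b i) ≤ a i - b i := by
      have := mul_le_mul_of_nonneg_left h (hb0 i).le
      rw [mul_sub, mul_one, mul_div_cancel₀ _ (hb0 i).ne'] at this
      linarith
    have h3 : Real.log (a i / b i) = - Real.log (b i / a i) := by
      rw [← Real.log_inv, inv_div]
    simp only [hedef]
    rw [h3] at h2; nlinarith
  have heq : ∀ i, e i = 0 → a i = b i := by
    intro i hi
    by_contra hne
    have ht1 : a i / b i ≠ 1 := fun h => hne ((div_eq_one_iff_eq (hb0 i).ne').1 h)
    have h := Real.log_lt_sub_one_of_pos (div_pos (ha0 i) (hb0 i)) ht1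
    have h2 : b i * Real.log (a i / b i) < a i - b i := by
      have := mul_lt_mul_of_pos_left h (hb0 i)
      rw [mul_sub, mul_one, mul_div_cancel₀ _ (hb0 i).ne'] at this
      linarith
    have h3 : Real.log (a i / b i) = - Real.log (b i / a i) := by
      rw [← Real.log_inv, inv_div]
    rw [h3] at h2
    simp only [hedef] at hi; nlinarith
  -- pointwise identity
  have hid : ∀ i, (-(a i * Real.log (a i))) - (-(b i * Real.log (b i)))
      = e i + c i * d i - d i := by
    intro i
    simp only [hedef, hcdef, hddef]
    rw [Real.log_div (hb0 i).ne' (ha0 i).ne']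
    ring
  -- Abel summation
  have habel : ∀ n, ∑ i ∈ Finset.range n, c i * d i
      = c n * D n + ∑ i ∈ Finset.range n, (c (i+1) - c i) * (-D (i+1)) := by
    intro n
    induction n with
    | zero => simp [hDdef]
    | succ n ih =>
      rw [Finset.sum_range_succ, ih, Finset.sum_range_succ]
      have : D (n+1) = D n + d n := by simp [hDdef, Finset.sum_range_succ]
      rw [this]; ring
  set E : ℕ → ℝ := fun n => ∑ i ∈ Finset.range n, e i with hEdef
  set T : ℕ → ℝ := fun n => ∑ i ∈ Finset.range n, (c (i+1) - c i) * (-D (i+1)) with hTdef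
  set S : ℕ → ℝ := fun n => ∑ i ∈ Finset.range n,
    ((-(a i * Real.log (a i))) - (-(b i * Real.log (b i)))) with hSdef
  have hkey : ∀ n, E n + T n = S n - c n * D n + D n := by
    intro n
    have : S n = E n + (c n * D n + T n) - D n := by
      simp only [hSdef, hEdef, hTdef]
      rw [← habel n, ← Finset.sum_add_distrib, ← Finset.sum_sub_distrib]
      exact Finset.sum_congr rfl (fun i _ => hid i)
    linarith
  -- limits
  have hSlim : Tendsto S atTop (𝓝 0) := by
    have hsum : Summable (fun i => (-(a i * Real.log (a i))) - (-(b i * Real.log (b i)))) :=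
      hHa.sub hHb
    have : ∑' i, ((-(a i * Real.log (a i))) - (-(b i * Real.log (b i)))) = 0 := by
      rw [Summable.tsum_sub hHa hHb, hent, sub_self]
    have h := hsum.hasSum.tendsto_sum_nat
    rw [this] at h
    exact h
  have hDlim : Tendsto D atTop (𝓝 0) := by
    have hsum : Summable d := hsa.sub hsb
    have : ∑' i, d i = 0 := by
      simp only [hddef]
      rw [Summable.tsum_sub hsa hsb, hta, htb, sub_self]
    have h := hsum.hasSum.tendsto_sum_nat
    rw [this] at h
    exact h
  -- boundary term tends to 0
  have hcD : Tendsto (fun n => c n * D n) atTop (𝓝 0) := by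
    have htail : Tendsto (fun n => ∑' i, -(a (i + n) * Real.log (a (i + n)))) atTop (𝓝 0) :=
      tendsto_sum_nat_add (fun j => -(a j * Real.log (a j)))
    have hub : ∀ n, -(c n * D n) ≤ ∑' i, -(a (i + n) * Real.log (a (i + n))) := by
      intro n
      have hsta : Summable (fun i => a (i + n)) := (summable_nat_add_iff n).2 hsa
      have hstH : Summable (fun i => -(a (i + n) * Real.log (a (i + n)))) :=
        (summable_nat_add_iff n).2 hHa
      have h1 : -D n ≤ ∑' i, a (i + n) := by
        have hBle : ∑ i ∈ Finset.range n, b i ≤ 1 :=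
          htb ▸ Summable.sum_le_tsum _ (fun j _ => (hb0 j).le) hsb
        have h2 : (∑ i ∈ Finset.range n, a i) + ∑' i, a (i + n) = 1 :=
          hta ▸ Summable.sum_add_tsum_nat_add n hsa
        simp only [hDdef, hddef, Finset.sum_sub_distrib, neg_sub]
        linarith
      calc -(c n * D n) = c n * (-D n) := by ring
        _ ≤ c n * ∑' i, a (i + n) := mul_le_mul_of_nonneg_left h1 (hc0 n)
        _ = ∑' i, c n * a (i + n) := by rw [tsum_mul_left]
        _ ≤ ∑' i, -(a (i + n) * Real.log (a (i + n))) := by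
            refine Summable.tsum_le_tsum (fun i => ?_) (hsta.mul_left _) hstH
            have : -(a (i+n) * Real.log (a (i+n))) = c (i+n) * a (i+n) := by
              simp only [hcdef]; ring
            rw [this]
            exact mul_le_mul_of_nonneg_right (hcmono (Nat.le_add_left n i)) (ha0 _).le
    have hlb : ∀ n, c n * D n ≤ 0 := fun n =>
      mul_nonpos_of_nonneg_of_nonpos (hc0 n) (hDneg n)
    have h1 : Tendsto (fun n => -(c n * D n)) atTop (𝓝 0) := by
      refine tendsto_of_tendsto_of_tendsto_of_le_of_le tendsto_const_nhds htail
        (fun n => neg_nonneg.2 (hlb n)) hub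
    simpa using h1.neg
  -- conclude E + T → 0
  have hETlim : Tendsto (fun n => E n + T n) atTop (𝓝 0) := by
    have : Tendsto (fun n => S n - c n * D n + D n) atTop (𝓝 (0 - 0 + 0)) :=
      (hSlim.sub hcD).add hDlim
    simp only [sub_zero, add_zero] at this
    exact this.congr (fun n => (hkey n).symm)
  have hETmono : Monotone (fun n => E n + T n) := by
    refine monotone_nat_of_le_succ (fun n => ?_)
    simp only [hEdef, hTdef, Finset.sum_range_succ]
    have h1 : 0 ≤ e n := he0 n
    have h2 : 0 ≤ (c (n+1) - c n) * (-D (n+1)) :=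
      mul_nonneg (sub_nonneg.2 (hcmono (Nat.le_succ n))) (neg_nonneg.2 (hDneg (n+1)))
    linarith
  have hET0 : ∀ n, E n + T n ≤ 0 := fun n => hETmono.ge_of_tendsto hETlim n
  funext i
  have hEi : E (i+1) ≤ 0 := by
    have hT : 0 ≤ T (i+1) := Finset.sum_nonneg (fun k _ =>
      mul_nonneg (sub_nonneg.2 (hcmono (Nat.le_succ k))) (neg_nonneg.2 (hDneg (k+1))))
    linarith [hET0 (i+1)]
  have : e i = 0 := by
    have h1 : e i ≤ E (i+1) := by
      have := Finset.single_le_sum (f := e) (fun k _ => he0 k) (Finset.self_mem_range_succ i)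
      simpa [hEdef] using this
    exact le_antisymm (by linarith) (he0 i)
  exact heq i this
end

section
/- Let λ : ℕ → ℝ be a non-increasing summable sequence of nonnegative reals, let n be a natural number, and let u : ℕ → ℝ be a sequence with 0 ≤ uᵢ ≤ 1 for all i, which is summable with ∑ᵢ uᵢ = n. Then ∑ᵢ λᵢ·uᵢ ≤ ∑_{i<n} λᵢ. -/
/-- If `l : ℕ → ℝ` is a non-increasing summable sequence of
nonnegative reals and `u : ℕ → ℝ` satisfies `0 ≤ uᵢ ≤ 1`, is summable and
`∑ᵢ uᵢ = n`, then `∑ᵢ lᵢ·uᵢ ≤ ∑_{i<n} lᵢ`. -/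
theorem weighted_sum_le_partial_sum (l : ℕ → ℝ)
    (hl : Antitone l) (hl0 : ∀ i, 0 ≤ l i) (hls : Summable l)
    (n : ℕ) (u : ℕ → ℝ) (hu0 : ∀ i, 0 ≤ u i) (hu1 : ∀ i, u i ≤ 1)
    (hus : Summable u) (hun : ∑' i, u i = n) :
    ∑' i, l i * u i ≤ ∑ i ∈ Finset.range n, l i := by
  have hlu : Summable (fun i => l i * u i) := by
    apply hls.of_nonneg_of_le (fun i => mul_nonneg (hl0 i) (hu0 i))
    intro i
    calc l i * u i ≤ l i * 1 := mul_le_mul_of_nonneg_left (hu1 i) (hl0 i)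
      _ = l i := mul_one _
  have hus' : Summable (fun i => u (i + n)) := (summable_nat_add_iff n).2 hus
  have hlu' : Summable (fun i => l (i + n) * u (i + n)) := (summable_nat_add_iff n).2 hlu
  have htailu : ∑' i, u (i + n) = (n : ℝ) - ∑ i ∈ Finset.range n, u i := by
    have := Summable.sum_add_tsum_nat_add (f := u) n hus
    linarith [this, hun]
  calc ∑' i, l i * u i
      = ∑ i ∈ Finset.range n, l i * u i + ∑' i, l (i + n) * u (i + n) :=
        (Summable.sum_add_tsum_nat_add n hlu).symm
    _ ≤ ∑ i ∈ Finset.range n, l i * u i + l n * ∑' i, u (i + n) := by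
        gcongr _ + ?_
        rw [← tsum_mul_left]
        refine Summable.tsum_le_tsum (fun i => ?_) hlu' (hus'.mul_left _)
        exact mul_le_mul_of_nonneg_right (hl (Nat.le_add_left n i)) (hu0 _)
    _ = ∑ i ∈ Finset.range n, (l i * u i + l n * (1 - u i)) := by
        rw [htailu, Finset.sum_add_distrib]
        have : (n : ℝ) = ∑ _i ∈ Finset.range n, (1 : ℝ) := by simp
        rw [this, ← Finset.sum_sub_distrib, ← Finset.mul_sum]
    _ ≤ ∑ i ∈ Finset.range n, l i := by
        refine Finset.sum_le_sum fun i hi => ?_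
        have h1 : l n ≤ l i := hl (le_of_lt (Finset.mem_range.1 hi))
        nlinarith [hu1 i, hu0 i]
end

section
/- Let ρ₁, ρ₂ : Matrix (Fin n) (Fin n) ℂ be density matrices (positive semidefinite with trace 1), and suppose there exist matrices A₁, …, A_m : Matrix (Fin n) (Fin n) ℂ with ∑ᵢ Aᵢᴴ·Aᵢ = 1 and ∑ᵢ Aᵢ·Aᵢᴴ = 1 such that ρ₁ = ∑ᵢ Aᵢ·ρ₂·Aᵢᴴ. Then λ(ρ₁) is majorized by λ(ρ₂): for every k ≤ n, the sum of the k largest eigenvalues of ρ₁ is at most the sum of the k largest eigenvalues of ρ₂ (counted with multiplicity, eigenvalues taken via the Hermitian spectral theorem), and the total sums of eigenvalues are equal (both equal 1). -/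
/-!
The dual map `Φ* X = ∑ Aᵢᴴ X Aᵢ` is positive, unital (`∑ Aᵢᴴ Aᵢ = 1`) and trace preserving
(`∑ Aᵢ Aᵢᴴ = 1`). If `P` is the spectral projection of `ρ₁` onto `k` of its eigenvectors, the sum of
their eigenvalues is `tr (P ρ₁) = tr (Φ* P ρ₂)`, where `0 ≤ Φ* P ≤ 1` and `tr (Φ* P) = k`. In an
eigenbasis of `ρ₂` this reads `∑ⱼ cⱼ λⱼ(ρ₂)` with weights `0 ≤ cⱼ ≤ 1` summing to `k`, which is at
most the sum of the `k` largest eigenvalues of `ρ₂` (Ky Fan). The totals agree since `Φ` preserves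
the trace.
-/

open Matrix ComplexOrder
open scoped MatrixOrder

theorem sum_mul_le_sum_filter_lt_of_antitone {n k : ℕ} (hk : k ≤ n) {μ c : Fin n → ℝ}
    (hμ : Antitone μ) (hc0 : ∀ i, 0 ≤ c i) (hc1 : ∀ i, c i ≤ 1) (hc : ∑ i, c i = k) :
    ∑ i, c i * μ i ≤ ∑ i ∈ Finset.univ.filter (fun i : Fin n => (i : ℕ) < k), μ i := by
  obtain ⟨t, ht⟩ : ∃ t, ∀ i : Fin n, ((i : ℕ) < k → t ≤ μ i) ∧ (k ≤ (i : ℕ) → μ i ≤ t) := by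
    rcases n.eq_zero_or_pos with rfl | hn
    · exact ⟨0, fun i => i.elim0⟩
    · exact ⟨μ ⟨k - 1, by omega⟩, fun i =>
        ⟨fun hi => hμ (Fin.le_def.2 (by dsimp only; omega)),
          fun hi => hμ (Fin.le_def.2 (by dsimp only; omega))⟩⟩
  -- `t` separates the first `k` values of `μ` from the others, so `(d i - c i) * (μ i - t) ≥ 0`.
  set d : Fin n → ℝ := fun i => if (i : ℕ) < k then 1 else 0
  have hd : ∑ i, d i = k := by
    simp [d, Finset.sum_boole, Fin.card_filter_val_lt, hk]
  have hdμ : ∑ i, d i * μ i = ∑ i ∈ Finset.univ.filter (fun i : Fin n => (i : ℕ) < k), μ i := by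
    simp [d, Finset.sum_filter]
  have hterm : 0 ≤ ∑ i, (d i - c i) * (μ i - t) := by
    refine Finset.sum_nonneg fun i _ => ?_
    by_cases hi : (i : ℕ) < k
    · exact mul_nonneg (by simp [d, hi, hc1]) (sub_nonneg.2 ((ht i).1 hi))
    · exact mul_nonneg_of_nonpos_of_nonpos (by simp [d, hi, hc0])
        (sub_nonpos.2 ((ht i).2 (not_lt.1 hi)))
  have hexpand : ∑ i, (d i - c i) * (μ i - t) =
      ∑ i, d i * μ i - ∑ i, c i * μ i - t * (∑ i, d i - ∑ i, c i) := by
    simp only [Finset.mul_sum, ← Finset.sum_sub_distrib]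
    exact Finset.sum_congr rfl fun i _ => by ring
  rw [hexpand, hd, hc, sub_self, mul_zero, sub_zero, hdμ] at hterm
  linarith

namespace Matrix

variable {𝕜 n ι : Type*} [RCLike 𝕜] [Fintype n] [Fintype ι]

def krausMap (A : ι → Matrix n n 𝕜) (X : Matrix n n 𝕜) : Matrix n n 𝕜 :=
  ∑ i, A i * X * (A i)ᴴ

theorem trace_mul_krausMap (A : ι → Matrix n n 𝕜) (X Y : Matrix n n 𝕜) :
    (X * krausMap A Y).trace = (krausMap (fun i => (A i)ᴴ) X * Y).trace := by
  simp only [krausMap, conjTranspose_conjTranspose, Finset.mul_sum, Finset.sum_mul, trace_sum]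
  refine Finset.sum_congr rfl fun i _ => ?_
  rw [← Matrix.mul_assoc, ← Matrix.mul_assoc, trace_mul_cycle, Matrix.mul_assoc _ X]

theorem krausMap_one [DecidableEq n] {A : ι → Matrix n n 𝕜} (hA : ∑ i, A i * (A i)ᴴ = 1) :
    krausMap A 1 = 1 := by
  simpa [krausMap] using hA

theorem trace_krausMap [DecidableEq n] {A : ι → Matrix n n 𝕜} (hA : ∑ i, (A i)ᴴ * A i = 1)
    (X : Matrix n n 𝕜) : (krausMap A X).trace = X.trace := by
  have hA' : krausMap (fun i => (A i)ᴴ) 1 = 1 := krausMap_one (by simpa using hA)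
  simpa [hA'] using trace_mul_krausMap A 1 X

theorem krausMap_mono (A : ι → Matrix n n 𝕜) : Monotone (krausMap A) := fun _ _ hXY =>
  Finset.sum_le_sum fun i _ => star_right_conjugate_le_conjugate hXY (A i)

theorem krausMap_nonneg (A : ι → Matrix n n 𝕜) {X : Matrix n n 𝕜} (hX : 0 ≤ X) :
    0 ≤ krausMap A X := by
  simpa [krausMap] using krausMap_mono A hX

end Matrix

namespace Matrix.IsHermitian

variable {𝕜 n : Type*} [RCLike 𝕜] [Fintype n] [DecidableEq n] {M : Matrix n n 𝕜}

theorem trace_mul_eq_sum_diag_mul_eigenvalues (hM : M.IsHermitian) (X : Matrix n n 𝕜) :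
    (X * M).trace = ∑ j, (star (hM.eigenvectorUnitary : Matrix n n 𝕜) * X *
      hM.eigenvectorUnitary) j j * hM.eigenvalues j := by
  conv_lhs => rw [hM.spectral_theorem, Unitary.conjStarAlgAut_apply]
  rw [← Matrix.mul_assoc, ← Matrix.mul_assoc, trace_mul_cycle, Matrix.mul_assoc _ X]
  simp [trace, mul_diagonal]

theorem exists_trace_mul_eq_sum_eigenvalues (hM : M.IsHermitian) (s : Finset n) :
    ∃ P : Matrix n n 𝕜, 0 ≤ P ∧ P ≤ 1 ∧ P.trace = s.card ∧
      (P * M).trace = ∑ j ∈ s, (hM.eigenvalues j : 𝕜) := by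
  set U : Matrix n n 𝕜 := (hM.eigenvectorUnitary : Matrix n n 𝕜)
  have hU : U * star U = 1 := Unitary.coe_mul_star_self _
  have hU' : star U * U = 1 := Unitary.coe_star_mul_self _
  set D : Matrix n n 𝕜 := diagonal fun j => if j ∈ s then 1 else 0
  have hD0 : 0 ≤ D := (PosSemidef.diagonal fun j => by by_cases j ∈ s <;> simp [*]).nonneg
  have hD1 : D ≤ 1 := by
    rw [le_iff, ← diagonal_one, diagonal_sub]
    exact PosSemidef.diagonal fun j => by by_cases j ∈ s <;> simp [*]
  refine ⟨U * D * star U, by simpa using star_right_conjugate_le_conjugate hD0 U,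
    by simpa [hU] using star_right_conjugate_le_conjugate hD1 U, ?_, ?_⟩
  · rw [trace_mul_cycle, hU', one_mul]
    simp [D, trace_diagonal]
  · rw [hM.trace_mul_eq_sum_diag_mul_eigenvalues, ← Matrix.mul_assoc, ← Matrix.mul_assoc, hU',
      one_mul, Matrix.mul_assoc, hU', mul_one]
    simp [D, Finset.sum_ite_mem]

theorem re_trace_mul_le_sum_eigenvalues {d k : ℕ} {M : Matrix (Fin d) (Fin d) 𝕜}
    (hM : M.IsHermitian) {τ : Equiv.Perm (Fin d)} (hτ : Antitone fun i => hM.eigenvalues (τ i))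
    (hk : k ≤ d) {Q : Matrix (Fin d) (Fin d) 𝕜} (hQ0 : 0 ≤ Q) (hQ1 : Q ≤ 1)
    (hQk : Q.trace = k) :
    RCLike.re (Q * M).trace ≤
      ∑ i ∈ Finset.univ.filter (fun i : Fin d => (i : ℕ) < k), hM.eigenvalues (τ i) := by
  set U : Matrix (Fin d) (Fin d) 𝕜 := (hM.eigenvectorUnitary : Matrix (Fin d) (Fin d) 𝕜)
  have hU : U * star U = 1 := Unitary.coe_mul_star_self _
  have hU' : star U * U = 1 := Unitary.coe_star_mul_self _
  set C := star U * Q * U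
  have hC0 : 0 ≤ C := by simpa using star_left_conjugate_le_conjugate hQ0 U
  have hC1 : C ≤ 1 := by simpa [hU'] using star_left_conjugate_le_conjugate hQ1 U
  set c : Fin d → ℝ := fun j => RCLike.re (C j j)
  have hc0 (j : Fin d) : 0 ≤ c j := (RCLike.nonneg_iff.1 hC0.posSemidef.diag_nonneg).1
  have hc1 (j : Fin d) : c j ≤ 1 := by
    simpa [c, sub_nonneg] using (RCLike.nonneg_iff.1 ((le_iff.1 hC1).diag_nonneg (i := j))).1
  have hc : ∑ j, c j = k := by
    rw [← map_sum, show ∑ j, C j j = C.trace from rfl, trace_mul_cycle, hU, one_mul, hQk]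
    simp
  have hQM : RCLike.re (Q * M).trace = ∑ j, c j * hM.eigenvalues j := by
    simp [hM.trace_mul_eq_sum_diag_mul_eigenvalues, c, C, U]
  rw [hQM, ← Equiv.sum_comp τ]
  exact sum_mul_le_sum_filter_lt_of_antitone hk hτ (fun _ => hc0 _) (fun _ => hc1 _)
    (by rw [Equiv.sum_comp τ c, hc])

end Matrix.IsHermitian

theorem eigenvalues_majorized_of_bistochastic_general {n : ℕ}
    (ρ₁ ρ₂ : Matrix (Fin n) (Fin n) ℂ)
    (h1 : ρ₁.PosSemidef) (h2 : ρ₂.PosSemidef)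
    {m : ℕ} (A : Fin m → Matrix (Fin n) (Fin n) ℂ)
    (hA1 : ∑ i, (A i)ᴴ * A i = 1) (hA2 : ∑ i, A i * (A i)ᴴ = 1)
    (hρ : ρ₁ = ∑ i, A i * ρ₂ * (A i)ᴴ) :
    ∀ σ τ : Equiv.Perm (Fin n),
      Antitone (fun i => h1.isHermitian.eigenvalues (σ i)) →
      Antitone (fun i => h2.isHermitian.eigenvalues (τ i)) →
      (∀ k : ℕ, k ≤ n →
        ∑ i ∈ Finset.univ.filter (fun i : Fin n => (i : ℕ) < k),
            h1.isHermitian.eigenvalues (σ i) ≤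
          ∑ i ∈ Finset.univ.filter (fun i : Fin n => (i : ℕ) < k),
            h2.isHermitian.eigenvalues (τ i)) ∧
      ∑ i, h1.isHermitian.eigenvalues i = ∑ i, h2.isHermitian.eigenvalues i := by
  intro σ τ _ hτ
  change ρ₁ = krausMap A ρ₂ at hρ
  refine ⟨fun k hk => ?_, ?_⟩
  · obtain ⟨P, hP0, hP1, hPk, hPρ⟩ := h1.isHermitian.exists_trace_mul_eq_sum_eigenvalues
      ((Finset.univ.filter fun i : Fin n => (i : ℕ) < k).map σ.toEmbedding)
    have hdual_one : krausMap (fun i => (A i)ᴴ) 1 = 1 := krausMap_one (by simpa using hA1)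
    have hdual_trace : (krausMap (fun i => (A i)ᴴ) P).trace = k := by
      rw [trace_krausMap (by simpa using hA2), hPk, Finset.card_map, Fin.card_filter_val_lt,
        min_eq_right hk]
    calc _ = RCLike.re (P * ρ₁).trace := by simp [hPρ]
      _ = RCLike.re (krausMap (fun i => (A i)ᴴ) P * ρ₂).trace := by rw [hρ, trace_mul_krausMap]
      _ ≤ _ := h2.isHermitian.re_trace_mul_le_sum_eigenvalues hτ hk (krausMap_nonneg _ hP0)
          (hdual_one ▸ krausMap_mono _ hP1) hdual_trace
  · have htrace := trace_krausMap hA1 ρ₂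
    rw [← hρ, h1.isHermitian.trace_eq_sum_eigenvalues,
      h2.isHermitian.trace_eq_sum_eigenvalues] at htrace
    exact_mod_cast htrace

/-- If `ρ₁ = ∑ᵢ Aᵢ ρ₂ Aᵢᴴ` for a bi-stochastic family of Kraus
operators (`∑ᵢ Aᵢᴴ Aᵢ = 1 = ∑ᵢ Aᵢ Aᵢᴴ`) and `ρ₁, ρ₂` are density matrices,
then the eigenvalues of `ρ₁` are majorized by those of `ρ₂`: for any
permutations arranging the eigenvalues in non-increasing order, every initial
partial sum of eigenvalues of `ρ₁` is at most that of `ρ₂`, and the totals are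
equal. -/
theorem eigenvalues_majorized_of_bistochastic {n : ℕ}
    (ρ₁ ρ₂ : Matrix (Fin n) (Fin n) ℂ)
    (h1 : ρ₁.PosSemidef) (h2 : ρ₂.PosSemidef)
    (ht1 : ρ₁.trace = 1) (ht2 : ρ₂.trace = 1)
    {m : ℕ} (A : Fin m → Matrix (Fin n) (Fin n) ℂ)
    (hA1 : ∑ i, (A i)ᴴ * A i = 1) (hA2 : ∑ i, A i * (A i)ᴴ = 1)
    (hρ : ρ₁ = ∑ i, A i * ρ₂ * (A i)ᴴ) :
    ∀ σ τ : Equiv.Perm (Fin n),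
      Antitone (fun i => h1.isHermitian.eigenvalues (σ i)) →
      Antitone (fun i => h2.isHermitian.eigenvalues (τ i)) →
      (∀ k : ℕ, k ≤ n →
        ∑ i ∈ Finset.univ.filter (fun i : Fin n => (i : ℕ) < k),
            h1.isHermitian.eigenvalues (σ i) ≤
          ∑ i ∈ Finset.univ.filter (fun i : Fin n => (i : ℕ) < k),
            h2.isHermitian.eigenvalues (τ i)) ∧
      ∑ i, h1.isHermitian.eigenvalues i = ∑ i, h2.isHermitian.eigenvalues i :=
  eigenvalues_majorized_of_bistochastic_general ρ₁ ρ₂ h1 h2 A hA1 hA2 hρ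
end

section
/- Let ρ₁, ρ₂ : Matrix (Fin n) (Fin n) ℂ be density matrices (positive semidefinite with trace 1). Then λ(ρ₁) is majorized by λ(ρ₂) (for every k ≤ n the sum of the k largest eigenvalues of ρ₁ is at most that of ρ₂, with equal totals) if and only if there exist m : ℕ and matrices A₁, …, A_m : Matrix (Fin n) (Fin n) ℂ with ∑ᵢ Aᵢᴴ·Aᵢ = 1 and ∑ᵢ Aᵢ·Aᵢᴴ = 1 such that ρ₁ = ∑ᵢ Aᵢ·ρ₂·Aᵢᴴ. -/
/-!
Write `x`, `y` for the eigenvalue vectors of `ρ₁`, `ρ₂`. If `ρ₁ = ∑ᵢ Aᵢ ρ₂ Aᵢᴴ` with a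
bistochastic family, conjugating by diagonalising unitaries gives `diag x = ∑ᵢ Cᵢ (diag y) Cᵢᴴ`
with `Cᵢ` still bistochastic, so `x = M y` for the doubly stochastic matrix
`M j l = ∑ᵢ ‖Cᵢ j l‖²`; and `M y` is majorized by `y` once `y` is non-increasing.
Conversely, if `x` is majorized by `y` then `x` lies in the convex hull of the rearrangements
`y ∘ π` (Hahn–Banach separation, the rearrangement inequality and Abel summation), say
`x = ∑ π, w π • (y ∘ π)`. If `ρ₁ = V (diag x) Vᴴ` and `ρ₂ = W_π (diag (y ∘ π)) W_πᴴ`, the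
operators `√(w π) • V W_πᴴ` form a mixed unitary, hence bistochastic, family mapping `ρ₂` to `ρ₁`.
-/

open Matrix ComplexOrder Finset

section Majorization

variable {n : ℕ}

def partialSum (f : Fin n → ℝ) (k : ℕ) : ℝ :=
  ∑ i ∈ univ.filter (fun i : Fin n => (i : ℕ) < k), f i

def prefixIndicator (n k : ℕ) : Fin n → ℝ :=
  fun i => if (i : ℕ) < k then 1 else 0

/-- Majorization compared in the given order of the coordinates; this is the usual notion when
`x` and `y` are both non-increasing. -/
def Majorized (x y : Fin n → ℝ) : Prop :=
  (∀ k ≤ n, partialSum x k ≤ partialSum y k) ∧ ∑ i, x i = ∑ i, y i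

lemma partialSum_eq_dotProduct (f : Fin n → ℝ) (k : ℕ) :
    partialSum f k = prefixIndicator n k ⬝ᵥ f := by
  simp [partialSum, prefixIndicator, dotProduct, Finset.sum_filter]

lemma partialSum_of_le (f : Fin n → ℝ) {k : ℕ} (hk : n ≤ k) : partialSum f k = ∑ i, f i := by
  rw [partialSum, Finset.filter_true_of_mem fun i _ => i.2.trans_le hk]

lemma partialSum_castSucc (f : Fin (n + 1) → ℝ) (k : ℕ) :
    partialSum f k = partialSum (f ∘ Fin.castSucc) k + if n < k then f (Fin.last n) else 0 := by
  simp [partialSum, Finset.sum_filter, Fin.sum_univ_castSucc]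

lemma Majorized.partialSum_le {x y : Fin n → ℝ} (h : Majorized x y) (k : ℕ) :
    partialSum x k ≤ partialSum y k := by
  rcases le_total k n with hk | hk
  · exact h.1 k hk
  · rw [partialSum_of_le x hk, partialSum_of_le y hk, h.2]

/-- Abel summation, by induction on the last coordinate. -/
lemma mul_sum_le_sum_mul_of_partialSum_nonneg :
    ∀ {n : ℕ} {c d : Fin n → ℝ} {t : ℝ}, Antitone c → (∀ i, t ≤ c i) →
      (∀ k, 0 ≤ partialSum d k) → t * ∑ i, d i ≤ ∑ i, c i * d i
  | 0, _, _, _, _, _, _ => by simp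
  | n + 1, c, d, t, hc, htc, hd => by
    have hinit : ∀ k, 0 ≤ partialSum (d ∘ Fin.castSucc) k := by
      intro k
      rcases le_or_gt k n with hk | hk
      · simpa [partialSum_castSucc, hk.not_gt] using hd k
      · have := hd n
        rw [partialSum_castSucc, if_neg (lt_irrefl n), add_zero] at this
        rwa [partialSum_of_le _ hk.le, ← partialSum_of_le _ le_rfl]
    have ih : c (Fin.last n) * ∑ i, d (Fin.castSucc i) ≤
        ∑ i, c (Fin.castSucc i) * d (Fin.castSucc i) :=
      mul_sum_le_sum_mul_of_partialSum_nonneg (hc.comp_monotone Fin.strictMono_castSucc.monotone)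
        (fun i => hc (Fin.castSucc_lt_last i).le) hinit
    have htotal : 0 ≤ ∑ i, d i := by simpa [partialSum_of_le] using hd (n + 1)
    rw [Fin.sum_univ_castSucc] at htotal ⊢
    rw [Fin.sum_univ_castSucc (fun i => c i * d i)]
    nlinarith [htc (Fin.last n)]

theorem Majorized.sum_mul_le {x y c : Fin n → ℝ} (h : Majorized x y) (hc : Antitone c) :
    ∑ i, c i * x i ≤ ∑ i, c i * y i := by
  obtain ⟨t, ht⟩ := (Set.finite_range c).bddBelow
  have hd : ∀ k, 0 ≤ partialSum (y - x) k := fun k => by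
    simpa [partialSum, Finset.sum_sub_distrib] using h.partialSum_le k
  have := mul_sum_le_sum_mul_of_partialSum_nonneg hc (fun i => ht ⟨i, rfl⟩) hd
  simp only [Pi.sub_apply, Finset.sum_sub_distrib, mul_sub, h.2, sub_self, mul_zero] at this
  linarith

lemma exists_antitone_perm (f : Fin n → ℝ) :
    ∃ σ : Equiv.Perm (Fin n), Antitone (f ∘ σ) :=
  ⟨Fin.revPerm.trans (Tuple.sort f), fun _ _ hab => Tuple.monotone_sort f (Fin.rev_le_rev.mpr hab)⟩

theorem Majorized.exists_perm_sum_mul_le {x y : Fin n → ℝ} (h : Majorized x y) (hx : Antitone x)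
    (a : Fin n → ℝ) : ∃ π : Equiv.Perm (Fin n), ∑ i, a i * x i ≤ ∑ i, a i * y (π i) := by
  obtain ⟨ρ, hρ⟩ := exists_antitone_perm a
  refine ⟨ρ.symm, ?_⟩
  calc ∑ i, a i * x i = ∑ i, a (ρ i) * x (ρ i) := (Equiv.sum_comp ρ fun i => a i * x i).symm
    _ ≤ ∑ i, a (ρ i) * x i := (hρ.monovary hx).sum_mul_comp_perm_le_sum_mul
    _ ≤ ∑ i, a (ρ i) * y i := h.sum_mul_le hρ
    _ = ∑ i, a i * y (ρ.symm i) := by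
      rw [← Equiv.sum_comp ρ fun i => a i * y (ρ.symm i)]
      simp

theorem Majorized.exists_mem_stdSimplex {x y : Fin n → ℝ} (h : Majorized x y) (hx : Antitone x) :
    ∃ w ∈ stdSimplex ℝ (Equiv.Perm (Fin n)), ∑ π, w π • (y ∘ π) = x := by
  let L := Fintype.linearCombination ℝ fun π : Equiv.Perm (Fin n) => y ∘ π
  by_contra hne
  have hxK : x ∉ L '' stdSimplex ℝ _ := by
    rintro ⟨w, hw, hwx⟩
    exact hne ⟨w, hw, by simpa [L, Fintype.linearCombination_apply] using hwx⟩
  obtain ⟨f, u, hfK, hfx⟩ := geometric_hahn_banach_closed_point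
    ((convex_stdSimplex ℝ _).linear_image L)
    ((isCompact_stdSimplex ℝ _).image L.continuous_of_finiteDimensional).isClosed hxK
  let a : Fin n → ℝ := fun i => f fun j => if i = j then 1 else 0
  have hf : ∀ v, f v = ∑ i, a i * v i := fun v => by
    rw [← ContinuousLinearMap.coe_coe, LinearMap.pi_apply_eq_sum_univ]
    simp [a, mul_comm]
  obtain ⟨π, hπ⟩ := h.exists_perm_sum_mul_le hx a
  have hvertex : y ∘ π ∈ L '' stdSimplex ℝ _ :=
    ⟨Pi.single π 1, single_mem_stdSimplex ℝ π, by simp [L, Fintype.linearCombination_apply]⟩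
  have hfy := hfK _ hvertex
  simp only [hf, Function.comp_apply] at hfy hfx
  linarith

lemma dotProduct_le_partialSum {y q : Fin n → ℝ} {k : ℕ} (hy : Antitone y)
    (hq₀ : ∀ i, 0 ≤ q i) (hq₁ : ∀ i, q i ≤ 1) (hq : ∑ i, q i = ∑ i, prefixIndicator n k i) :
    q ⬝ᵥ y ≤ partialSum y k := by
  obtain ⟨c, hc⟩ : ∃ c, ∀ i : Fin n, ((i : ℕ) < k → c ≤ y i) ∧ (k ≤ i → y i ≤ c) := by
    by_cases hk : k < n
    · exact ⟨y ⟨k, hk⟩, fun i =>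
        ⟨fun hi => hy (Fin.mk_le_of_le_val hi.le), fun hi => hy (Fin.mk_le_of_le_val hi)⟩⟩
    · obtain ⟨c, hc⟩ := (Set.finite_range y).bddBelow
      exact ⟨c, fun i =>
        ⟨fun _ => hc ⟨i, rfl⟩, fun hi => absurd (i.2.trans_le (not_lt.mp hk)) hi.not_gt⟩⟩
  have key : partialSum y k - q ⬝ᵥ y = ∑ i, (prefixIndicator n k i - q i) * (y i - c) := by
    simp only [partialSum_eq_dotProduct, dotProduct, sub_mul, mul_sub, Finset.sum_sub_distrib,
      ← Finset.sum_mul, hq]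
    ring
  have hterm : ∀ i, 0 ≤ (prefixIndicator n k i - q i) * (y i - c) := fun i => by
    by_cases hi : (i : ℕ) < k
    · simpa [prefixIndicator, hi] using
        mul_nonneg (sub_nonneg.mpr (hq₁ i)) (sub_nonneg.mpr ((hc i).1 hi))
    · simpa [prefixIndicator, hi] using
        mul_nonpos_of_nonneg_of_nonpos (hq₀ i) (sub_nonpos.mpr ((hc i).2 (not_lt.mp hi)))
  linarith [Finset.sum_nonneg fun i (_ : i ∈ univ) => hterm i]

theorem majorized_mulVec_of_mem_doublyStochastic {y : Fin n → ℝ} {M : Matrix (Fin n) (Fin n) ℝ}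
    (hy : Antitone y) (hM : M ∈ doublyStochastic ℝ (Fin n)) : Majorized (M *ᵥ y) y := by
  refine ⟨fun k _ => ?_, ?_⟩
  · rw [partialSum_eq_dotProduct, dotProduct_mulVec]
    have hind : ∀ j, 0 ≤ prefixIndicator n k j ∧ prefixIndicator n k j ≤ 1 := fun j => by
      unfold prefixIndicator; split_ifs <;> norm_num
    refine dotProduct_le_partialSum hy (fun l => ?_) (fun l => ?_) ?_
    · simp only [vecMul, dotProduct]
      exact Finset.sum_nonneg fun j _ => mul_nonneg (hind j).1 (hM.1 j l)
    · calc (prefixIndicator n k ᵥ* M) l ≤ ∑ j, M j l := by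
            simp only [vecMul, dotProduct]
            exact Finset.sum_le_sum fun j _ => mul_le_of_le_one_left (hM.1 j l) (hind j).2
        _ = 1 := sum_col_of_mem_doublyStochastic hM l
    · rw [← dotProduct_one, ← dotProduct_mulVec, hM.2.1, dotProduct_one]
  · rw [← one_dotProduct, dotProduct_mulVec, hM.2.2, one_dotProduct]

end Majorization

lemma Unitary.star_mul_cancel_left {R : Type*} [Monoid R] [StarMul R] {U : R} (hU : U ∈ unitary R)
    (X : R) : star U * (U * X) = X := by
  rw [← mul_assoc, Unitary.star_mul_self_of_mem hU, one_mul]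

lemma Unitary.mul_star_cancel_left {R : Type*} [Monoid R] [StarMul R] {U : R} (hU : U ∈ unitary R)
    (X : R) : U * (star U * X) = X := by
  rw [← mul_assoc, Unitary.mul_star_self_of_mem hU, one_mul]

namespace Matrix.IsHermitian

variable {𝕜 m : Type*} [RCLike 𝕜] [Fintype m] [DecidableEq m] {A : Matrix m m 𝕜}

theorem spectral_theorem_comp_perm (hA : A.IsHermitian) (σ : Equiv.Perm m) :
    ∃ V ∈ unitaryGroup m 𝕜, A = V * diagonal (RCLike.ofReal ∘ hA.eigenvalues ∘ σ) * star V := by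
  set U := (hA.eigenvectorUnitary : Matrix m m 𝕜)
  have hstar : star (U.submatrix (Equiv.refl m) σ) = (star U).submatrix σ (Equiv.refl m) :=
    conjTranspose_submatrix _ _ _
  refine ⟨U.submatrix (Equiv.refl m) σ, ?_, ?_⟩
  · rw [mem_unitaryGroup_iff', hstar, submatrix_mul_equiv, Unitary.coe_star_mul_self,
      submatrix_one_equiv]
  · rw [hstar, ← Function.comp_assoc, ← submatrix_diagonal_equiv, submatrix_mul_equiv,
      submatrix_mul_equiv, Equiv.coe_refl, submatrix_id_id]
    conv_lhs => rw [hA.spectral_theorem, Unitary.conjStarAlgAut_apply]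

end Matrix.IsHermitian

section Kraus

variable {𝕜 ι m : Type*} [RCLike 𝕜] [Fintype ι]

def krausTransition (A : ι → Matrix m m 𝕜) : Matrix m m ℝ :=
  of fun j l => ∑ i, ‖A i j l‖ ^ 2

lemma krausTransition_conjTranspose (A : ι → Matrix m m 𝕜) :
    krausTransition (fun i => (A i)ᴴ) = (krausTransition A)ᵀ := by
  ext j l
  simp [krausTransition]

variable [Fintype m] [DecidableEq m]

def IsBistochastic (A : ι → Matrix m m 𝕜) : Prop :=
  ∑ i, (A i)ᴴ * A i = 1 ∧ ∑ i, A i * (A i)ᴴ = 1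

lemma IsBistochastic.conjTranspose {A : ι → Matrix m m 𝕜} (hA : IsBistochastic A) :
    IsBistochastic fun i => (A i)ᴴ :=
  ⟨by simpa using hA.2, by simpa using hA.1⟩

lemma IsBistochastic.unitary_mul_mul {A : ι → Matrix m m 𝕜} (hA : IsBistochastic A)
    {U V : Matrix m m 𝕜} (hU : U ∈ unitaryGroup m 𝕜) (hV : V ∈ unitaryGroup m 𝕜) :
    IsBistochastic fun i => U * A i * V := by
  constructor
  · calc ∑ i, (U * A i * V)ᴴ * (U * A i * V) = star V * (∑ i, (A i)ᴴ * A i) * V := by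
          simp [← star_eq_conjTranspose, Finset.mul_sum, Finset.sum_mul, mul_assoc,
            Unitary.star_mul_cancel_left hU]
      _ = 1 := by rw [hA.1, mul_one, Unitary.star_mul_self_of_mem hV]
  · calc ∑ i, (U * A i * V) * (U * A i * V)ᴴ = U * (∑ i, A i * (A i)ᴴ) * star U := by
          simp [← star_eq_conjTranspose, Finset.mul_sum, Finset.sum_mul, mul_assoc,
            Unitary.mul_star_cancel_left hV]
      _ = 1 := by rw [hA.2, mul_one, Unitary.mul_star_self_of_mem hU]

lemma sum_mul_diagonal_mul_conjTranspose_apply_self (A : ι → Matrix m m 𝕜) (y : m → ℝ) (j : m) :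
    (∑ i, A i * diagonal (RCLike.ofReal ∘ y) * (A i)ᴴ : Matrix m m 𝕜) j j =
      ((krausTransition A *ᵥ y) j : 𝕜) := by
  simp only [Matrix.sum_apply, mul_apply, diagonal_apply, Function.comp_apply, mul_ite, mul_zero,
    sum_ite_eq', mem_univ, if_true, conjTranspose_apply, RCLike.star_def, mulVec, dotProduct,
    krausTransition, of_apply, map_sum, map_mul, map_pow]
  rw [Finset.sum_comm]
  refine Finset.sum_congr rfl fun l _ => ?_
  rw [Finset.sum_mul]
  refine Finset.sum_congr rfl fun i _ => ?_
  rw [← RCLike.mul_conj]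
  ring

lemma krausTransition_mulVec_one {A : ι → Matrix m m 𝕜} (hA : ∑ i, A i * (A i)ᴴ = 1) :
    krausTransition A *ᵥ 1 = 1 := by
  funext j
  have := sum_mul_diagonal_mul_conjTranspose_apply_self A 1 j
  simp only [Pi.comp_one, map_one, Function.const_one, diagonal_one', mul_one, hA,
    one_apply_eq] at this
  exact_mod_cast this.symm

theorem IsBistochastic.krausTransition_mem_doublyStochastic {A : ι → Matrix m m 𝕜}
    (hA : IsBistochastic A) : krausTransition A ∈ doublyStochastic ℝ m := by
  refine ⟨fun j l => Finset.sum_nonneg fun i _ => by positivity,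
    krausTransition_mulVec_one hA.2, ?_⟩
  rw [← mulVec_transpose, ← krausTransition_conjTranspose]
  exact krausTransition_mulVec_one hA.conjTranspose.2

theorem IsBistochastic.exists_doublyStochastic_mulVec_eigenvalues {A : ι → Matrix m m 𝕜}
    (hA : IsBistochastic A) {ρ₁ ρ₂ : Matrix m m 𝕜} (h₁ : ρ₁.IsHermitian) (h₂ : ρ₂.IsHermitian)
    (hρ : ρ₁ = ∑ i, A i * ρ₂ * (A i)ᴴ) (σ τ : Equiv.Perm m) :
    ∃ M ∈ doublyStochastic ℝ m, M *ᵥ (h₂.eigenvalues ∘ τ) = h₁.eigenvalues ∘ σ := by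
  obtain ⟨V, hV, hρ₁⟩ := h₁.spectral_theorem_comp_perm σ
  obtain ⟨W, hW, hρ₂⟩ := h₂.spectral_theorem_comp_perm τ
  set C := fun i => star V * A i * W
  have hdiag : diagonal (RCLike.ofReal ∘ h₁.eigenvalues ∘ σ) =
      ∑ i, C i * diagonal (RCLike.ofReal ∘ h₂.eigenvalues ∘ τ) * (C i)ᴴ := by
    calc diagonal (RCLike.ofReal ∘ h₁.eigenvalues ∘ σ) = star V * ρ₁ * V := by
          conv_rhs => rw [hρ₁]
          simp [mul_assoc, Unitary.star_mul_cancel_left hV, Unitary.star_mul_self_of_mem hV]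
      _ = _ := by
          conv_lhs => rw [hρ, hρ₂]
          simp [C, ← star_eq_conjTranspose, Finset.mul_sum, Finset.sum_mul, mul_assoc]
  refine ⟨krausTransition C,
    (hA.unitary_mul_mul (Unitary.star_mem hV) hW).krausTransition_mem_doublyStochastic,
    funext fun j => ?_⟩
  have := congr_fun₂ hdiag j j
  rw [sum_mul_diagonal_mul_conjTranspose_apply_self, diagonal_apply_eq, Function.comp_apply] at this
  exact_mod_cast this.symm

theorem exists_isBistochastic_of_eq_sum_smul_unitary_conj {w : ι → ℝ} (hw : w ∈ stdSimplex ℝ ι)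
    {U : ι → Matrix m m 𝕜} (hU : ∀ i, U i ∈ unitaryGroup m 𝕜) {ρ₁ ρ₂ : Matrix m m 𝕜}
    (hρ : ρ₁ = ∑ i, (w i : 𝕜) • (U i * ρ₂ * star (U i))) :
    ∃ (k : ℕ) (A : Fin k → Matrix m m 𝕜), IsBistochastic A ∧ ρ₁ = ∑ j, A j * ρ₂ * (A j)ᴴ := by
  set A := fun i => (√(w i) : 𝕜) • U i
  have hsq : ∀ i, (√(w i) : 𝕜) * (√(w i) : 𝕜) = w i := fun i => by
    rw [← RCLike.ofReal_mul, Real.mul_self_sqrt (hw.1 i)]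
  have hstar : ∀ i, (A i)ᴴ = (√(w i) : 𝕜) • star (U i) := fun i => by
    simp [A, ← star_eq_conjTranspose]
  have hAA : ∀ i, (A i)ᴴ * A i = (w i : 𝕜) • 1 := fun i => by
    rw [hstar, smul_mul_smul, hsq, Unitary.star_mul_self_of_mem (hU i)]
  have hAA' : ∀ i, A i * (A i)ᴴ = (w i : 𝕜) • 1 := fun i => by
    rw [hstar, smul_mul_smul, hsq, Unitary.mul_star_self_of_mem (hU i)]
  have hAρ : ∀ i, A i * ρ₂ * (A i)ᴴ = (w i : 𝕜) • (U i * ρ₂ * star (U i)) := fun i => by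
    rw [hstar, smul_mul_assoc, smul_mul_smul, hsq]
  have hw1 : ∑ i, (w i : 𝕜) • (1 : Matrix m m 𝕜) = 1 := by
    rw [← Finset.sum_smul, ← RCLike.ofReal_sum, hw.2, RCLike.ofReal_one, one_smul]
  let e := (Fintype.equivFin ι).symm
  refine ⟨Fintype.card ι, fun j => A (e j), ⟨?_, ?_⟩, ?_⟩
  · rw [Equiv.sum_comp e fun i => (A i)ᴴ * A i]
    simp only [hAA, hw1]
  · rw [Equiv.sum_comp e fun i => A i * (A i)ᴴ]
    simp only [hAA', hw1]
  · rw [Equiv.sum_comp e fun i => A i * ρ₂ * (A i)ᴴ]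
    simp only [hAρ, hρ]

theorem exists_isBistochastic_of_eigenvalues_eq_sum_perm {ρ₁ ρ₂ : Matrix m m 𝕜}
    (h₁ : ρ₁.IsHermitian) (h₂ : ρ₂.IsHermitian) (σ τ : Equiv.Perm m) {w : Equiv.Perm m → ℝ}
    (hw : w ∈ stdSimplex ℝ (Equiv.Perm m))
    (hx : ∑ π, w π • (h₂.eigenvalues ∘ τ ∘ π) = h₁.eigenvalues ∘ σ) :
    ∃ (k : ℕ) (A : Fin k → Matrix m m 𝕜), IsBistochastic A ∧ ρ₁ = ∑ j, A j * ρ₂ * (A j)ᴴ := by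
  obtain ⟨V, hV, hρ₁⟩ := h₁.spectral_theorem_comp_perm σ
  choose W hW hρ₂ using fun π : Equiv.Perm m => h₂.spectral_theorem_comp_perm (π.trans τ)
  refine exists_isBistochastic_of_eq_sum_smul_unitary_conj hw
    (fun π => mul_mem hV (Unitary.star_mem (hW π))) ?_
  have hconj : ∀ π, V * star (W π) * ρ₂ * star (V * star (W π)) =
      V * diagonal (RCLike.ofReal ∘ h₂.eigenvalues ∘ τ ∘ π) * star V := fun π => by
    conv_lhs => rw [hρ₂ π]
    simp [mul_assoc, Unitary.star_mul_cancel_left (hW π)]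
  calc ρ₁ = V * diagonal (RCLike.ofReal ∘ ∑ π, w π • (h₂.eigenvalues ∘ τ ∘ π)) * star V := by
        rw [hx]; exact hρ₁
    _ = ∑ π, (w π : 𝕜) • (V * diagonal (RCLike.ofReal ∘ h₂.eigenvalues ∘ τ ∘ π) * star V) := by
        have : diagonal ((RCLike.ofReal : ℝ → 𝕜) ∘ ∑ π, w π • (h₂.eigenvalues ∘ τ ∘ π)) =
            ∑ π, (w π : 𝕜) • diagonal (RCLike.ofReal ∘ h₂.eigenvalues ∘ τ ∘ π) := by
          ext a b
          by_cases hab : a = b <;>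
            simp [hab, Matrix.sum_apply, RCLike.real_smul_eq_coe_mul (K := 𝕜)]
        simp only [this, Finset.mul_sum, Finset.sum_mul, mul_smul_comm, smul_mul_assoc]
    _ = _ := by simp only [hconj]

end Kraus

theorem eigenvalues_majorized_iff_bistochastic_general {n : ℕ}
    (ρ₁ ρ₂ : Matrix (Fin n) (Fin n) ℂ)
    (h1 : ρ₁.PosSemidef) (h2 : ρ₂.PosSemidef) :
    (∀ σ τ : Equiv.Perm (Fin n),
      Antitone (fun i => h1.isHermitian.eigenvalues (σ i)) →
      Antitone (fun i => h2.isHermitian.eigenvalues (τ i)) →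
      (∀ k : ℕ, k ≤ n →
        ∑ i ∈ Finset.univ.filter (fun i : Fin n => (i : ℕ) < k),
            h1.isHermitian.eigenvalues (σ i) ≤
          ∑ i ∈ Finset.univ.filter (fun i : Fin n => (i : ℕ) < k),
            h2.isHermitian.eigenvalues (τ i)) ∧
      ∑ i, h1.isHermitian.eigenvalues i = ∑ i, h2.isHermitian.eigenvalues i)
    ↔ ∃ (m : ℕ) (A : Fin m → Matrix (Fin n) (Fin n) ℂ),
        (∑ i, (A i)ᴴ * A i = 1) ∧ (∑ i, A i * (A i)ᴴ = 1) ∧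
        ρ₁ = ∑ i, A i * ρ₂ * (A i)ᴴ := by
  constructor
  · intro h
    obtain ⟨σ, hσ⟩ := exists_antitone_perm h1.isHermitian.eigenvalues
    obtain ⟨τ, hτ⟩ := exists_antitone_perm h2.isHermitian.eigenvalues
    obtain ⟨hpartial, htotal⟩ := h σ τ hσ hτ
    have hmaj : Majorized (h1.isHermitian.eigenvalues ∘ σ) (h2.isHermitian.eigenvalues ∘ τ) :=
      ⟨hpartial, by simpa [Equiv.sum_comp] using htotal⟩
    obtain ⟨w, hw, hx⟩ := hmaj.exists_mem_stdSimplex hσ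
    obtain ⟨k, A, hA, hρ⟩ :=
      exists_isBistochastic_of_eigenvalues_eq_sum_perm h1.isHermitian h2.isHermitian σ τ hw hx
    exact ⟨k, A, hA.1, hA.2, hρ⟩
  · rintro ⟨k, A, hA₁, hA₂, hρ⟩ σ τ - hτ
    obtain ⟨M, hM, hMy⟩ := IsBistochastic.exists_doublyStochastic_mulVec_eigenvalues ⟨hA₁, hA₂⟩
      h1.isHermitian h2.isHermitian hρ σ τ
    have hmaj : Majorized (h1.isHermitian.eigenvalues ∘ σ) (h2.isHermitian.eigenvalues ∘ τ) := by
      rw [← hMy]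
      exact majorized_mulVec_of_mem_doublyStochastic hτ hM
    exact ⟨hmaj.1, by simpa [Equiv.sum_comp] using hmaj.2⟩

/-- Uhlmann-type theorem, finite dimension: For density matrices
`ρ₁, ρ₂`, the eigenvalues of `ρ₁` are majorized by those of `ρ₂` (for any
permutations arranging the eigenvalues in non-increasing order, every initial
partial sum for `ρ₁` is at most that for `ρ₂`, with equal totals) if and only
if `ρ₁ = ∑ᵢ Aᵢ ρ₂ Aᵢᴴ` for some bi-stochastic family of Kraus operators
(`∑ᵢ Aᵢᴴ Aᵢ = 1 = ∑ᵢ Aᵢ Aᵢᴴ`). -/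
theorem eigenvalues_majorized_iff_bistochastic {n : ℕ}
    (ρ₁ ρ₂ : Matrix (Fin n) (Fin n) ℂ)
    (h1 : ρ₁.PosSemidef) (h2 : ρ₂.PosSemidef)
    (ht1 : ρ₁.trace = 1) (ht2 : ρ₂.trace = 1) :
    (∀ σ τ : Equiv.Perm (Fin n),
      Antitone (fun i => h1.isHermitian.eigenvalues (σ i)) →
      Antitone (fun i => h2.isHermitian.eigenvalues (τ i)) →
      (∀ k : ℕ, k ≤ n →
        ∑ i ∈ Finset.univ.filter (fun i : Fin n => (i : ℕ) < k),
            h1.isHermitian.eigenvalues (σ i) ≤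
          ∑ i ∈ Finset.univ.filter (fun i : Fin n => (i : ℕ) < k),
            h2.isHermitian.eigenvalues (τ i)) ∧
      ∑ i, h1.isHermitian.eigenvalues i = ∑ i, h2.isHermitian.eigenvalues i)
    ↔ ∃ (m : ℕ) (A : Fin m → Matrix (Fin n) (Fin n) ℂ),
        (∑ i, (A i)ᴴ * A i = 1) ∧ (∑ i, A i * (A i)ᴴ = 1) ∧
        ρ₁ = ∑ i, A i * ρ₂ * (A i)ᴴ :=
  eigenvalues_majorized_iff_bistochastic_general ρ₁ ρ₂ h1 h2
end

section
/- Let ρ : Matrix (Fin n) (Fin n) ℂ be a positive definite density matrix (positive definite with trace 1), and let A₁, …, A_m : Matrix (Fin n) (Fin n) ℂ satisfy ∑ᵢ Aᵢᴴ·Aᵢ = 1 and ∑ᵢ Aᵢ·Aᵢᴴ = 1. If S(∑ᵢ Aᵢ·ρ·Aᵢᴴ) = S(ρ), where S is the von Neumann entropy, then there exists a unitary matrix U : Matrix (Fin n) (Fin n) ℂ such that ∑ᵢ Aᵢ·ρ·Aᵢᴴ = U·ρ·Uᴴ. -/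
/-!
Diagonalize `ρ = W diag(p) Wᴴ` and `σ = ∑ᵢ Aᵢ ρ Aᵢᴴ = V diag(q) Vᴴ`. With `Bᵢ = Vᴴ Aᵢ W` the
spectra are related by `q = M p`, where `M k j = ∑ᵢ |(Bᵢ) k j|²` is doubly stochastic because
`∑ᵢ Aᵢᴴ Aᵢ = 1 = ∑ᵢ Aᵢ Aᵢᴴ`. Concavity of `φ` gives
`S(σ) = ∑ₖ φ(∑ⱼ M k j p j) ≥ ∑ₖ ∑ⱼ M k j φ(p j) = S(ρ)`, and in the equality case strict concavity
forces `p j = q k` whenever `M k j ≠ 0`. Counting `∑ M k j` over `{q k = a} × {p j = a}` by rows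
and by columns shows that `p` and `q` agree as multisets, so `ρ` and `σ` have the same eigenvalues
and are unitarily conjugate.
-/

open Matrix ComplexOrder

/-- The von Neumann entropy of a (Hermitian) matrix: `S(M) = ∑ᵢ φ(λᵢ(M))`,
where `φ(x) = -x·log x` and the `λᵢ(M)` are the eigenvalues of `M` (with
multiplicity). Junk value `0` for non-Hermitian matrices. -/
noncomputable def vnEntropy {d : ℕ} (M : Matrix (Fin d) (Fin d) ℂ) : ℝ :=
  haveI := Classical.dec M.IsHermitian; if h : M.IsHermitian then ∑ i, Real.negMulLog (h.eigenvalues i) else 0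

namespace Matrix

section Spectrum

variable {𝕜 n : Type*} [RCLike 𝕜] [Fintype n] [DecidableEq n] {A B : Matrix n n 𝕜}

theorem IsHermitian.conjTranspose_eigenvectorUnitary_mul_mul_eigenvectorUnitary
    (hA : A.IsHermitian) :
    (hA.eigenvectorUnitary : Matrix n n 𝕜)ᴴ * A * hA.eigenvectorUnitary
      = diagonal (fun i => (hA.eigenvalues i : 𝕜)) := by
  simpa only [Unitary.conjStarAlgAut_star_apply, star_eq_conjTranspose, Function.comp_def]
    using hA.conjStarAlgAut_star_eigenvectorUnitary

/-- `IsHermitian.eigenvalues` lists the eigenvalues in decreasing order, so it is determined by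
the multiset of eigenvalues. -/
theorem IsHermitian.eigenvalues_eq_of_map_univ_eq (hA : A.IsHermitian) (hB : B.IsHermitian)
    (h : Finset.univ.val.map hA.eigenvalues = Finset.univ.val.map hB.eigenvalues) :
    hA.eigenvalues = hB.eigenvalues := by
  rw [hA.eigenvalues_eq_eigenvalues_iff hB, hA.charpoly_eq, hB.charpoly_eq]
  have := congrArg (fun s => (s.map fun a : ℝ => Polynomial.X - Polynomial.C (a : 𝕜)).prod) h
  simp only [Multiset.map_map, Function.comp_def] at this
  exact this

theorem IsHermitian.exists_unitary_eq_conj_of_eigenvalues_eq (hA : A.IsHermitian)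
    (hB : B.IsHermitian) (h : hA.eigenvalues = hB.eigenvalues) :
    ∃ U ∈ unitaryGroup n 𝕜, B = U * A * star U := by
  refine ⟨↑(hB.eigenvectorUnitary * star hA.eigenvectorUnitary), SetLike.coe_mem _, ?_⟩
  conv_lhs => rw [hB.spectral_theorem, ← h, ← hA.conjStarAlgAut_star_eigenvectorUnitary,
    ← Unitary.conjStarAlgAut_mul_apply]
  rfl

end Spectrum

section DoublyStochastic

variable {n : Type*} [Fintype n] [DecidableEq n] {M : Matrix n n ℝ}

theorem mulVec_negMulLog_le_negMulLog_mulVec {p : n → ℝ} (hM : M ∈ doublyStochastic ℝ n)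
    (hp : 0 ≤ p) (k : n) : (M *ᵥ (Real.negMulLog ∘ p)) k ≤ Real.negMulLog ((M *ᵥ p) k) := by
  simpa [mulVec, dotProduct] using Real.concaveOn_negMulLog.le_map_sum
    (fun j _ => nonneg_of_mem_doublyStochastic hM) (sum_row_of_mem_doublyStochastic hM k)
    (fun j _ => Set.mem_Ici.mpr (hp j))

theorem eq_mulVec_apply_of_sum_negMulLog_eq {p : n → ℝ} (hM : M ∈ doublyStochastic ℝ n)
    (hp : 0 ≤ p) (h : ∑ k, Real.negMulLog ((M *ᵥ p) k) = ∑ j, Real.negMulLog (p j)) {k j : n}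
    (hkj : M k j ≠ 0) : p j = (M *ᵥ p) k := by
  -- the row-wise Jensen inequalities add up to `h`, because the columns of `M` sum to `1`
  have hrow : (M *ᵥ (Real.negMulLog ∘ p)) k = Real.negMulLog ((M *ᵥ p) k) := by
    refine (Finset.sum_eq_sum_iff_of_le fun k _ => mulVec_negMulLog_le_negMulLog_mulVec hM hp k).mp
      ?_ k (Finset.mem_univ k)
    rw [h, sum_mulVec_of_mem_doublyStochastic hM, Function.comp_def]
  have hjensen := Real.strictConcaveOn_negMulLog.map_sum_eq_iff'
    (fun j _ => nonneg_of_mem_doublyStochastic hM) (sum_row_of_mem_doublyStochastic hM k)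
    (fun j _ => Set.mem_Ici.mpr (hp j))
  simpa [mulVec, dotProduct] using hjensen.mp (by simpa [mulVec, dotProduct] using hrow.symm) j
    (Finset.mem_univ j) hkj

theorem map_univ_eq_of_mem_doublyStochastic {α : Type*} {p q : n → α}
    (hM : M ∈ doublyStochastic ℝ n) (h : ∀ k j, M k j ≠ 0 → p j = q k) :
    Finset.univ.val.map q = Finset.univ.val.map p := by
  classical
  ext a
  let K : Finset n := {k | a = q k}
  let J : Finset n := {j | a = p j}
  have hK : ∀ k ∈ K, ∑ j ∈ J, M k j = 1 := fun k hk => by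
    rw [← sum_row_of_mem_doublyStochastic hM k]
    refine Finset.sum_subset (Finset.subset_univ J) fun j _ hj => ?_
    by_contra hkj
    simp_all [K, J, h k j hkj]
  have hJ : ∀ j ∈ J, ∑ k ∈ K, M k j = 1 := fun j hj => by
    rw [← sum_col_of_mem_doublyStochastic hM j]
    refine Finset.sum_subset (Finset.subset_univ K) fun k _ hk => ?_
    by_contra hkj
    simp_all [K, J, h k j hkj]
  have hcard : (K.card : ℝ) = J.card := by
    calc (K.card : ℝ) = ∑ k ∈ K, ∑ j ∈ J, M k j := by simp [Finset.sum_congr rfl hK]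
      _ = ∑ j ∈ J, ∑ k ∈ K, M k j := Finset.sum_comm
      _ = J.card := by simp [Finset.sum_congr rfl hJ]
  rw [Multiset.count_map, Multiset.count_map]
  exact_mod_cast hcard

theorem map_univ_mulVec_eq_of_sum_negMulLog_eq {p : n → ℝ} (hM : M ∈ doublyStochastic ℝ n)
    (hp : 0 ≤ p) (h : ∑ k, Real.negMulLog ((M *ᵥ p) k) = ∑ j, Real.negMulLog (p j)) :
    Finset.univ.val.map (M *ᵥ p) = Finset.univ.val.map p :=
  map_univ_eq_of_mem_doublyStochastic hM fun _ _ hkj =>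
    eq_mulVec_apply_of_sum_negMulLog_eq hM hp h hkj

end DoublyStochastic

section Kraus

variable {n ι : Type*} [Fintype ι]

noncomputable def krausTransitionMatrix (B : ι → Matrix n n ℂ) : Matrix n n ℝ :=
  of fun k j => ∑ i, Complex.normSq (B i k j)

theorem krausTransitionMatrix_conjTranspose (B : ι → Matrix n n ℂ) :
    krausTransitionMatrix (fun i => (B i)ᴴ) = (krausTransitionMatrix B)ᵀ := by
  ext k j
  simp [krausTransitionMatrix]

variable [Fintype n]

theorem sum_conj_mul_conj_conjTranspose {α : Type*} [CommSemiring α] [StarRing α]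
    (U W X : Matrix n n α) (A : ι → Matrix n n α) :
    ∑ i, (U * A i * W) * X * (U * A i * W)ᴴ = U * (∑ i, A i * (W * X * Wᴴ) * (A i)ᴴ) * Uᴴ := by
  simp only [conjTranspose_mul, Finset.mul_sum, Finset.sum_mul, Matrix.mul_assoc]

variable [DecidableEq n]

theorem sum_mul_diagonal_mul_conjTranspose_apply_self (B : ι → Matrix n n ℂ) (d : n → ℝ)
    (k : n) : (∑ i, B i * diagonal (fun j => (d j : ℂ)) * (B i)ᴴ) k k
      = ((krausTransitionMatrix B *ᵥ d) k : ℂ) := by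
  simp only [sum_apply, mul_apply, diagonal_apply, conjTranspose_apply, krausTransitionMatrix,
    mulVec, dotProduct, of_apply, mul_ite, mul_zero, Finset.sum_ite_eq', Finset.mem_univ, if_true]
  push_cast
  rw [Finset.sum_comm]
  refine Finset.sum_congr rfl fun j _ => ?_
  rw [Finset.sum_mul]
  refine Finset.sum_congr rfl fun i _ => ?_
  rw [← Complex.mul_conj, Complex.star_def]
  ring

theorem sum_krausTransitionMatrix_apply {B : ι → Matrix n n ℂ} (h : ∑ i, B i * (B i)ᴴ = 1)
    (k : n) : ∑ j, krausTransitionMatrix B k j = 1 := by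
  have := sum_mul_diagonal_mul_conjTranspose_apply_self B 1 k
  simp only [Pi.one_apply, Complex.ofReal_one, diagonal_one, h, one_apply_eq,
    mulVec, dotProduct, mul_one] at this
  exact_mod_cast this.symm

theorem krausTransitionMatrix_mem_doublyStochastic {B : ι → Matrix n n ℂ}
    (h1 : ∑ i, (B i)ᴴ * B i = 1) (h2 : ∑ i, B i * (B i)ᴴ = 1) :
    krausTransitionMatrix B ∈ doublyStochastic ℝ n := by
  refine mem_doublyStochastic_iff_sum.mpr ⟨fun k j => Finset.sum_nonneg fun i _ =>
    Complex.normSq_nonneg _, sum_krausTransitionMatrix_apply h2, fun j => ?_⟩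
  simpa only [krausTransitionMatrix_conjTranspose, transpose_apply] using
    sum_krausTransitionMatrix_apply (B := fun i => (B i)ᴴ)
      (by simpa only [conjTranspose_conjTranspose] using h1) j

theorem exists_mem_doublyStochastic_eq_mulVec_of_conj_eq_diagonal {ρ V W : Matrix n n ℂ}
    {A : ι → Matrix n n ℂ} {p q : n → ℝ} (hV : V ∈ unitaryGroup n ℂ) (hW : W ∈ unitaryGroup n ℂ)
    (h1 : ∑ i, (A i)ᴴ * A i = 1) (h2 : ∑ i, A i * (A i)ᴴ = 1)
    (hρ : Wᴴ * ρ * W = diagonal (fun j => (p j : ℂ)))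
    (hσ : Vᴴ * (∑ i, A i * ρ * (A i)ᴴ) * V = diagonal (fun k => (q k : ℂ))) :
    ∃ M ∈ doublyStochastic ℝ n, q = M *ᵥ p := by
  have hVV : Vᴴ * V = 1 := mem_unitaryGroup_iff'.mp hV
  have hWW : Wᴴ * W = 1 := mem_unitaryGroup_iff'.mp hW
  have hVV' : V * Vᴴ = 1 := mem_unitaryGroup_iff.mp hV
  have hWW' : W * Wᴴ = 1 := mem_unitaryGroup_iff.mp hW
  let B i := Vᴴ * A i * W
  have hBH : ∀ i, (B i)ᴴ = Wᴴ * (A i)ᴴ * V := fun i => by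
    simp only [B, conjTranspose_mul, conjTranspose_conjTranspose, Matrix.mul_assoc]
  have hB1 : ∑ i, (B i)ᴴ * B i = 1 :=
    calc ∑ i, (B i)ᴴ * B i = ∑ i, (B i)ᴴ * 1 * (B i)ᴴᴴ := by
          simp only [Matrix.mul_one, conjTranspose_conjTranspose]
      _ = Wᴴ * (∑ i, (A i)ᴴ * (V * 1 * Vᴴ) * (A i)ᴴᴴ) * Wᴴᴴ := by
          simp only [hBH]; exact sum_conj_mul_conj_conjTranspose Wᴴ V 1 fun i => (A i)ᴴ
      _ = 1 := by
          simp only [Matrix.mul_one, hVV', conjTranspose_conjTranspose, h1, hWW]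
  have hB2 : ∑ i, B i * (B i)ᴴ = 1 :=
    calc ∑ i, B i * (B i)ᴴ = ∑ i, B i * 1 * (B i)ᴴ := by simp only [Matrix.mul_one]
      _ = Vᴴ * (∑ i, A i * (W * 1 * Wᴴ) * (A i)ᴴ) * Vᴴᴴ := sum_conj_mul_conj_conjTranspose Vᴴ W 1 A
      _ = 1 := by
          simp only [Matrix.mul_one, hWW', conjTranspose_conjTranspose, h2, hVV]
  have hB : ∑ i, B i * diagonal (fun j => (p j : ℂ)) * (B i)ᴴ = diagonal (fun k => (q k : ℂ)) := by
    have hρ' : W * (Wᴴ * ρ * W) * Wᴴ = ρ := by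
      simp only [Matrix.mul_assoc, hWW', Matrix.mul_one]
      simp only [← Matrix.mul_assoc, hWW', Matrix.one_mul]
    rw [← hρ, ← hσ, sum_conj_mul_conj_conjTranspose, hρ', conjTranspose_conjTranspose]
  refine ⟨krausTransitionMatrix B, krausTransitionMatrix_mem_doublyStochastic hB1 hB2,
    funext fun k => ?_⟩
  have := sum_mul_diagonal_mul_conjTranspose_apply_self B p k
  rw [hB, diagonal_apply_eq] at this
  exact_mod_cast this

theorem IsHermitian.exists_mem_doublyStochastic_eigenvalues_eq_mulVec {ρ : Matrix n n ℂ}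
    (hρ : ρ.IsHermitian) {A : ι → Matrix n n ℂ} (h1 : ∑ i, (A i)ᴴ * A i = 1)
    (h2 : ∑ i, A i * (A i)ᴴ = 1) (hσ : (∑ i, A i * ρ * (A i)ᴴ).IsHermitian) :
    ∃ M ∈ doublyStochastic ℝ n, hσ.eigenvalues = M *ᵥ hρ.eigenvalues :=
  exists_mem_doublyStochastic_eq_mulVec_of_conj_eq_diagonal hσ.eigenvectorUnitary.2
    hρ.eigenvectorUnitary.2 h1 h2
    hρ.conjTranspose_eigenvectorUnitary_mul_mul_eigenvectorUnitary
    hσ.conjTranspose_eigenvectorUnitary_mul_mul_eigenvectorUnitary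

end Kraus

end Matrix

theorem bistochastic_entropy_preserving_on_state_is_unitary_general {n m : ℕ}
    (ρ : Matrix (Fin n) (Fin n) ℂ) (hρ : ρ.PosDef)
    (A : Fin m → Matrix (Fin n) (Fin n) ℂ)
    (hA1 : ∑ i, (A i)ᴴ * A i = 1) (hA2 : ∑ i, A i * (A i)ᴴ = 1)
    (hS : vnEntropy (∑ i, A i * ρ * (A i)ᴴ) = vnEntropy ρ) :
    ∃ U : Matrix (Fin n) (Fin n) ℂ, Uᴴ * U = 1 ∧
      ∑ i, A i * ρ * (A i)ᴴ = U * ρ * Uᴴ := by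
  have hσ : (∑ i, A i * ρ * (A i)ᴴ).IsHermitian :=
    isSelfAdjoint_sum _ fun i _ => isHermitian_mul_mul_conjTranspose (A i) hρ.1
  obtain ⟨M, hM, hq⟩ := hρ.1.exists_mem_doublyStochastic_eigenvalues_eq_mulVec hA1 hA2 hσ
  have hentropy : ∑ k, Real.negMulLog ((M *ᵥ hρ.1.eigenvalues) k)
      = ∑ j, Real.negMulLog (hρ.1.eigenvalues j) := by
    simpa only [vnEntropy, dif_pos hσ, dif_pos hρ.1, hq] using hS
  have hspec := hσ.eigenvalues_eq_of_map_univ_eq hρ.1 (hq ▸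
    map_univ_mulVec_eq_of_sum_negMulLog_eq hM (fun j => (hρ.eigenvalues_pos j).le) hentropy)
  obtain ⟨U, hU, hσU⟩ := hρ.1.exists_unitary_eq_conj_of_eigenvalues_eq hσ hspec.symm
  exact ⟨U, mem_unitaryGroup_iff'.mp hU, hσU⟩

/-- If `ρ` is a positive definite density matrix,
`∑ᵢ Aᵢᴴ Aᵢ = 1 = ∑ᵢ Aᵢ Aᵢᴴ` (a bi-stochastic family of Kraus operators), and
the von Neumann entropy satisfies `S(∑ᵢ Aᵢ ρ Aᵢᴴ) = S(ρ)`, then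
`∑ᵢ Aᵢ ρ Aᵢᴴ = U ρ Uᴴ` for some unitary `U`. -/
theorem bistochastic_entropy_preserving_on_state_is_unitary {n m : ℕ}
    (ρ : Matrix (Fin n) (Fin n) ℂ) (hρ : ρ.PosDef) (htr : ρ.trace = 1)
    (A : Fin m → Matrix (Fin n) (Fin n) ℂ)
    (hA1 : ∑ i, (A i)ᴴ * A i = 1) (hA2 : ∑ i, A i * (A i)ᴴ = 1)
    (hS : vnEntropy (∑ i, A i * ρ * (A i)ᴴ) = vnEntropy ρ) :
    ∃ U : Matrix (Fin n) (Fin n) ℂ, Uᴴ * U = 1 ∧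
      ∑ i, A i * ρ * (A i)ᴴ = U * ρ * Uᴴ :=
  bistochastic_entropy_preserving_on_state_is_unitary_general ρ hρ A hA1 hA2 hS
end

section
/- Let M : Matrix (Fin n) (Fin n) ℂ be positive semidefinite (so its diagonal entries are real and nonnegative). If ∑_{i,j} ‖M_{ij}‖² = (∑ᵢ Re(M_{ii}))², then ‖M_{ij}‖² = Re(M_{ii})·Re(M_{jj}) for all i, j. -/
open Matrix ComplexOrder

/-! The principal 2 × 2 minor of `M` on rows and columns `i, j` is positive semidefinite, so its
determinant `M i i * M j j - ‖M i j‖²` is nonnegative. Summing these inequalities over all `i, j`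
gives `∑ ‖M i j‖² ≤ (∑ Re M i i)²`, so equality of the sums forces equality termwise. -/

theorem Matrix.PosSemidef.norm_apply_sq_le {𝕜 ι : Type*} [RCLike 𝕜]
    {A : Matrix ι ι 𝕜} (hA : A.PosSemidef) (i j : ι) :
    ‖A i j‖ ^ 2 ≤ RCLike.re (A i i) * RCLike.re (A j j) := by
  have hminor := (hA.submatrix ![i, j]).det_nonneg
  rw [det_fin_two] at hminor
  have hji : A j i = star (A i j) := by simpa using (hA.isHermitian.apply j i).symm
  obtain ⟨-, hii⟩ := RCLike.nonneg_iff.mp (hA.diag_nonneg (i := i))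
  obtain ⟨-, hjj⟩ := RCLike.nonneg_iff.mp (hA.diag_nonneg (i := j))
  simpa [hji, RCLike.mul_conj, hii, hjj] using (RCLike.nonneg_iff.mp hminor).1

theorem Finset.eq_of_le_of_sum_sum_eq {ι κ M : Type*} [Fintype ι] [Fintype κ]
    [AddCommMonoid M] [PartialOrder M] [IsOrderedCancelAddMonoid M]
    {f g : ι → κ → M} (hle : ∀ i j, f i j ≤ g i j)
    (h : ∑ i, ∑ j, f i j = ∑ i, ∑ j, g i j) (i : ι) (j : κ) : f i j = g i j := by
  have hrow := (sum_eq_sum_iff_of_le fun i _ ↦ sum_le_sum fun j _ ↦ hle i j).mp h i (mem_univ i)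
  exact (sum_eq_sum_iff_of_le fun j _ ↦ hle i j).mp hrow j (mem_univ j)

/-- If `M` is a positive semidefinite complex matrix and
`∑_{i,j} ‖M_{ij}‖² = (∑ᵢ Re M_{ii})²`, then `‖M_{ij}‖² = Re(M_{ii})·Re(M_{jj})`
for all `i, j`. -/
theorem posSemidef_sq_norm_entries_eq {n : ℕ}
    (M : Matrix (Fin n) (Fin n) ℂ) (hM : M.PosSemidef)
    (h : ∑ i, ∑ j, ‖M i j‖ ^ 2 = (∑ i, (M i i).re) ^ 2) :
    ∀ i j, ‖M i j‖ ^ 2 = (M i i).re * (M j j).re := by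
  rw [sq, Finset.sum_mul_sum] at h
  exact Finset.eq_of_le_of_sum_sum_eq hM.norm_apply_sq_le h
end
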